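/- arXiv:2101.06306 — 6 statements merged into one kernel-verified Lean document; each statement's English description precedes it below -/
import Mathlib

section
/- Let d ≥ 1, let A ⊂ ℝ^d be compact, let X_1, X_2, … be i.i.d. random points with common Borel distribution μ satisfying μ(A) = 1, and let B ⊆ A. Fix k ∈ ℕ. Suppose Z is a real random variable with continuous cumulative distribution function, and a, b ∈ (0,∞), c, c' ∈ ℝ are such that for every t ∈ ℝ, lim_{n→∞} P[ a·n·R_{n,k}^d − b·log n − c·log log n − c' ≤ t ] = P[Z ≤ t]. For r > 0 define N(r,k) := inf{ n ∈ ℕ : every x ∈ B has at least k of the points X_1,…,X_n in the closed ball B(x,r) } (inf ∅ := +∞). Then for every t ∈ ℝ, lim_{r→0+} P[ a·r^d·N(r,k) − b·log( (b/a)·r^{−d} ) − (c+b)·log log(r^{−d}) − c' ≤ t ] = P[Z ≤ t]. -/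
/-!
Since `N(r,k) ≤ x ↔ R_{⌊x⌋,k} ≤ r`, the event in the conclusion at radius `r` coincides with the
event of the hypothesis for `n(r) = ⌊q(r)⌋` points at a level `T(r)`, where, with `u = r^{-d}`,
`q = S u / a` and `S` is the right-hand side of the normalised event for `N(r,k)`. As `r → 0⁺`
we have `S ~ b log u`, hence `n(r) → ∞` and `log n(r) = log u + log log u + O(1)`, and a direct
computation gives `T(r) → t`. Distribution functions are monotone in the level and the limit
`P[Z ≤ ·]` is continuous at `t`, so convergence at fixed levels just below and above `t`
transfers to the moving levels `T(r)`.
-/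

open MeasureTheory Metric Filter Topology

noncomputable section

/-- Every point of `B` has at least `k` of the points `X 0, …, X (n-1)` within distance `r`. -/
def covers {d : ℕ} (X : ℕ → EuclideanSpace ℝ (Fin d)) (n k : ℕ)
    (B : Set (EuclideanSpace ℝ (Fin d))) (r : ℝ) : Prop :=
  ∀ x ∈ B, k ≤ {i : ℕ | i < n ∧ X i ∈ closedBall x r}.ncard

/-- The `k`-coverage threshold `R_{n,k}`, as an extended real (`+∞` if no radius works). -/
def covThresh {d : ℕ} (X : ℕ → EuclideanSpace ℝ (Fin d)) (n k : ℕ)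
    (B : Set (EuclideanSpace ℝ (Fin d))) : EReal :=
  sInf {ρ : EReal | ∃ r : ℝ, ρ = (r : EReal) ∧ 0 < r ∧ covers X n k B r}

/-- `N(r,k)`: the smallest number `n` of points such that every point of `B` has at least `k`
of `X 0, …, X (n-1)` within distance `r`; `+∞` if there is no such `n`. -/
def coverNum {d : ℕ} (X : ℕ → EuclideanSpace ℝ (Fin d)) (k : ℕ)
    (B : Set (EuclideanSpace ℝ (Fin d))) (r : ℝ) : EReal :=
  sInf {ρ : EReal | ∃ n : ℕ, ρ = (n : EReal) ∧ covers X n k B r}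

theorem tendsto_comp_of_monotone {ι α : Type*} {L : Filter ι} {l : Filter α}
    {G : ι → ℝ → ℝ} {F : ℝ → ℝ} (hmono : ∀ i, Monotone (G i))
    (hG : ∀ s, Tendsto (fun i => G i s) L (𝓝 (F s))) {t : ℝ} (hF : ContinuousAt F t)
    {n : α → ι} (hn : Tendsto n l L) {τ : α → ℝ} (hτ : Tendsto τ l (𝓝 t)) :
    Tendsto (fun x => G (n x) (τ x)) l (𝓝 (F t)) := by
  refine tendsto_order.2 ⟨fun y hy => ?_, fun y hy => ?_⟩
  · obtain ⟨s, hst, hys⟩ := (hF.eventually (eventually_gt_nhds hy)).exists_lt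
    filter_upwards [((hG s).comp hn).eventually (eventually_gt_nhds hys),
      hτ.eventually (eventually_gt_nhds hst)] with x hGx hτx
    exact hGx.trans_le (hmono _ hτx.le)
  · obtain ⟨s, hst, hys⟩ := (hF.eventually (eventually_lt_nhds hy)).exists_gt
    filter_upwards [((hG s).comp hn).eventually (eventually_lt_nhds hys),
      hτ.eventually (eventually_lt_nhds hst)] with x hGx hτx
    exact (hmono _ hτx.le).trans_lt hGx

theorem monotone_measure_le_coe_toReal {Ω : Type*} [MeasurableSpace Ω] (P : Measure Ω)
    [IsFiniteMeasure P] (f : Ω → EReal) : Monotone fun s : ℝ => (P {ω | f ω ≤ s}).toReal :=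
  fun _ _ hss => ENNReal.toReal_mono (measure_ne_top P _)
    (measure_mono fun _ hω => le_trans hω (EReal.coe_le_coe_iff.2 hss))

theorem Real.tendsto_log_sub_log_of_tendsto_div {α : Type*} {l : Filter α} {f g : α → ℝ}
    (h : Tendsto (fun x => f x / g x) l (𝓝 1)) (hg : ∀ᶠ x in l, g x ≠ 0) :
    Tendsto (fun x => Real.log (f x) - Real.log (g x)) l (𝓝 0) := by
  have hlog := (Real.continuousAt_log one_ne_zero).tendsto.comp h
  rw [Real.log_one] at hlog
  refine hlog.congr' ?_
  filter_upwards [hg, h.eventually (eventually_gt_nhds one_pos)] with x hgx hfg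
  have hfx : f x ≠ 0 := by
    rintro hf
    simp [hf] at hfg
  exact Real.log_div hfx hgx

namespace EReal

theorem sub_coe_le_coe_iff (x : EReal) (p s : ℝ) : x - p ≤ s ↔ x ≤ ((s + p : ℝ) : EReal) :=
  EReal.sub_le_iff_le_add (.inl (coe_ne_bot p)) (.inl (coe_ne_top p))

theorem coe_mul_le_coe_iff {p : ℝ} (hp : 0 < p) (x : EReal) (s : ℝ) :
    (p : EReal) * x ≤ s ↔ x ≤ ((s / p : ℝ) : EReal) := by
  rw [coe_div, le_div_iff_mul_le (by exact_mod_cast hp) (coe_ne_top p), mul_comm]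

theorem pow_le_coe_pow_iff {R : EReal} (hR : 0 ≤ R) {r : ℝ} (hr : 0 ≤ r) {d : ℕ} (hd : d ≠ 0) :
    R ^ d ≤ ((r ^ d : ℝ) : EReal) ↔ R ≤ r := by
  induction R using EReal.rec with
  | bot => simp at hR
  | coe x =>
    rw [← coe_pow, EReal.coe_le_coe_iff, EReal.coe_le_coe_iff]
    exact pow_le_pow_iff_left₀ (by exact_mod_cast hR) hr hd
  | top =>
    obtain ⟨m, rfl⟩ := Nat.exists_eq_succ_of_ne_zero hd
    have htop : (⊤ : EReal) ^ (m + 1) = ⊤ := by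
      clear hd
      induction m with
      | zero => simp
      | succ m ih => rw [pow_succ, ih, top_mul_top]
    rw [htop, top_le_iff, top_le_iff]
    exact iff_of_false (coe_ne_top _) (coe_ne_top _)

end EReal

section Covers

variable {d : ℕ} {X : ℕ → EuclideanSpace ℝ (Fin d)} {n m k : ℕ}
  {B : Set (EuclideanSpace ℝ (Fin d))} {r r' x : ℝ}

theorem covers.mono_num (hnm : n ≤ m) (h : covers X n k B r) : covers X m k B r :=
  fun y hy => (h y hy).trans <| Set.ncard_le_ncard (fun _ hi => ⟨hi.1.trans_le hnm, hi.2⟩)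
    ((Set.finite_Iio m).subset fun _ hi => hi.1)

theorem covers.mono_radius (hrr : r ≤ r') (h : covers X n k B r) : covers X n k B r' :=
  fun y hy => (h y hy).trans <| Set.ncard_le_ncard
    (fun _ hi => ⟨hi.1, closedBall_subset_closedBall hrr hi.2⟩)
    ((Set.finite_Iio n).subset fun _ hi => hi.1)

-- Only the finitely many points `X 0, …, X (n-1)` matter, and a slightly larger radius
-- catches none of them that the radius `r` misses.
theorem covers_of_forall_pos_add (h : ∀ ε > 0, covers X n k B (r + ε)) : covers X n k B r := by
  intro y hy
  have hsmall : ∀ᶠ ε in 𝓝[>] (0 : ℝ),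
      ∀ i ∈ Finset.range n, dist (X i) y ≤ r + ε → dist (X i) y ≤ r := by
    refine (Finset.eventually_all _).2 fun i _ => ?_
    rcases le_or_gt (dist (X i) y) r with hle | hlt
    · exact Eventually.of_forall fun _ _ => hle
    · filter_upwards [Ioo_mem_nhdsGT (sub_pos.2 hlt)] with ε hε hle
      linarith [hε.2]
  obtain ⟨ε, hcatch, hε⟩ := (hsmall.and self_mem_nhdsWithin).exists
  refine (h ε hε y hy).trans <| Set.ncard_le_ncard (fun i hi => ⟨hi.1, ?_⟩)
    ((Set.finite_Iio n).subset fun _ hi => hi.1)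
  exact hcatch i (Finset.mem_range.2 hi.1) hi.2

theorem covThresh_nonneg : 0 ≤ covThresh X n k B :=
  le_sInf <| by
    rintro _ ⟨s, rfl, hs, -⟩
    exact_mod_cast hs.le

theorem covThresh_le_coe_iff (hr : 0 < r) : covThresh X n k B ≤ r ↔ covers X n k B r := by
  refine ⟨fun h => covers_of_forall_pos_add fun ε hε => ?_, fun h => sInf_le ⟨r, rfl, hr, h⟩⟩
  have hlt : covThresh X n k B < ((r + ε : ℝ) : EReal) :=
    h.trans_lt (EReal.coe_lt_coe_iff.2 (lt_add_of_pos_right r hε))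
  obtain ⟨_, ⟨s, rfl, -, hs⟩, hslt⟩ := sInf_lt_iff.1 hlt
  exact hs.mono_radius (EReal.coe_lt_coe_iff.1 hslt).le

theorem coverNum_le_coe_iff (hx : 0 ≤ x) : coverNum X k B r ≤ x ↔ covers X ⌊x⌋₊ k B r := by
  refine ⟨fun h => ?_, fun h => (sInf_le ⟨⌊x⌋₊, rfl, h⟩ : coverNum X k B r ≤ _).trans ?_⟩
  · by_contra hfl
    have hlow : ((⌊x⌋₊ + 1 : ℕ) : EReal) ≤ coverNum X k B r := le_sInf <| by
      rintro _ ⟨m, rfl, hm⟩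
      exact_mod_cast not_le.1 fun hle => hfl (hm.mono_num hle)
    have := hlow.trans h
    rw [← EReal.coe_coe_eq_natCast, EReal.coe_le_coe_iff] at this
    exact (Nat.lt_floor_add_one x).not_ge (by exact_mod_cast this)
  · rw [← EReal.coe_coe_eq_natCast, EReal.coe_le_coe_iff]
    exact Nat.floor_le hx

theorem coverNum_le_coe_iff_covThresh_le (hr : 0 < r) (hx : 0 ≤ x) :
    coverNum X k B r ≤ x ↔ covThresh X ⌊x⌋₊ k B ≤ r := by
  rw [coverNum_le_coe_iff hx, covThresh_le_coe_iff hr]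

end Covers

-- With `u = r ^ (-d)`, the event of the conclusion reads `N(r,k) ≤ covCount u`, and for
-- `n = sampleSize u` the event `R_{n,k} ≤ r` is the event of the hypothesis at level
-- `threshLevel u`.
def covLevel (a b c c' t u : ℝ) : ℝ :=
  t + c' + (c + b) * Real.log (Real.log u) + b * Real.log (b / a * u)

def covCount (a b c c' t u : ℝ) : ℝ :=
  covLevel a b c c' t u * u / a

def sampleSize (a b c c' t u : ℝ) : ℕ :=
  ⌊covCount a b c c' t u⌋₊

def threshLevel (a b c c' t u : ℝ) : ℝ :=
  a * sampleSize a b c c' t u / u - b * Real.log (sampleSize a b c c' t u)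
    - c * Real.log (Real.log (sampleSize a b c c' t u)) - c'

section Asymptotics

open Real

variable {a b : ℝ} (c c' t : ℝ) {u : ℝ}

theorem covLevel_eq (ha : 0 < a) (hb : 0 < b) (hu : 0 < u) :
    covLevel a b c c' t u = b * log u + (c + b) * log (log u) + (t + c' + b * log (b / a)) := by
  rw [covLevel, log_mul (div_pos hb ha).ne' hu.ne']
  ring

theorem tendsto_covLevel_div_log (ha : 0 < a) (hb : 0 < b) :
    Tendsto (fun u => covLevel a b c c' t u / (b * log u)) atTop (𝓝 1) := by
  have hlog : Tendsto (fun u => log (log u) / log u) atTop (𝓝 0) :=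
    isLittleO_log_id_atTop.tendsto_div_nhds_zero.comp tendsto_log_atTop
  have hconst : Tendsto (fun u => (t + c' + b * log (b / a)) / (b * log u)) atTop (𝓝 0) :=
    tendsto_const_nhds.div_atTop (tendsto_log_atTop.const_mul_atTop hb)
  have hsum := ((hlog.const_mul ((c + b) / b)).add hconst).const_add 1
  rw [mul_zero, add_zero, add_zero] at hsum
  refine hsum.congr' ?_
  filter_upwards [eventually_gt_atTop 1] with u hu
  have hlog_pos : 0 < log u := log_pos hu
  rw [covLevel_eq c c' t ha hb (one_pos.trans hu)]
  field_simp
  ring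

theorem tendsto_covLevel_atTop (ha : 0 < a) (hb : 0 < b) :
    Tendsto (covLevel a b c c' t) atTop atTop := by
  refine ((tendsto_covLevel_div_log c c' t ha hb).pos_mul_atTop one_pos
    (tendsto_log_atTop.const_mul_atTop hb)).congr' ?_
  filter_upwards [eventually_gt_atTop 1] with u hu
  have hlog_pos : 0 < log u := log_pos hu
  field_simp

theorem tendsto_covCount_atTop (ha : 0 < a) (hb : 0 < b) :
    Tendsto (covCount a b c c' t) atTop atTop :=
  ((tendsto_covLevel_atTop c c' t ha hb).atTop_mul_atTop₀ tendsto_id).atTop_div_const ha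

theorem tendsto_sampleSize_atTop (ha : 0 < a) (hb : 0 < b) :
    Tendsto (sampleSize a b c c' t) atTop atTop :=
  tendsto_nat_floor_atTop.comp (tendsto_covCount_atTop c c' t ha hb)

theorem tendsto_mul_sampleSize_div_sub_covLevel (ha : 0 < a) (hb : 0 < b) :
    Tendsto (fun u => a * sampleSize a b c c' t u / u - covLevel a b c c' t u) atTop (𝓝 0) := by
  refine squeeze_zero_norm' ?_ (tendsto_const_nhds.div_atTop tendsto_id : Tendsto (a / ·) _ _)
  filter_upwards [eventually_gt_atTop 0,
    (tendsto_covCount_atTop c c' t ha hb).eventually_ge_atTop 0]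
    with u hu hq
  have hfloor : |(sampleSize a b c c' t u : ℝ) - covCount a b c c' t u| ≤ 1 := by
    rw [sampleSize, abs_sub_comm, abs_le]
    constructor <;> linarith [Nat.floor_le hq, Nat.lt_floor_add_one (covCount a b c c' t u)]
  have hsplit : a * sampleSize a b c c' t u / u - covLevel a b c c' t u
      = a / u * (sampleSize a b c c' t u - covCount a b c c' t u) := by
    rw [covCount]
    field_simp
  rw [hsplit, norm_mul, Real.norm_of_nonneg (by positivity), Real.norm_eq_abs]
  exact mul_le_of_le_one_right (by positivity) hfloor

theorem tendsto_log_sampleSize_sub_log_covCount (ha : 0 < a) (hb : 0 < b) :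
    Tendsto (fun u => log (sampleSize a b c c' t u) - log (covCount a b c c' t u))
      atTop (𝓝 0) :=
  tendsto_log_sub_log_of_tendsto_div
    (tendsto_nat_floor_div_atTop.comp (tendsto_covCount_atTop c c' t ha hb))
    ((tendsto_covCount_atTop c c' t ha hb).eventually_ne_atTop 0)

theorem tendsto_log_covLevel_sub_log (ha : 0 < a) (hb : 0 < b) :
    Tendsto (fun u => log (covLevel a b c c' t u) - log (b * log u)) atTop (𝓝 0) :=
  tendsto_log_sub_log_of_tendsto_div (tendsto_covLevel_div_log c c' t ha hb)
    ((tendsto_log_atTop.const_mul_atTop hb).eventually_ne_atTop 0)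

theorem log_covCount (ha : 0 < a) (hu : 0 < u) (hS : 0 < covLevel a b c c' t u) :
    log (covCount a b c c' t u) = log (covLevel a b c c' t u) + log u - log a := by
  rw [covCount, log_div (by positivity) ha.ne', log_mul hS.ne' hu.ne']

theorem tendsto_log_sampleSize_div_log (ha : 0 < a) (hb : 0 < b) :
    Tendsto (fun u => log (sampleSize a b c c' t u) / log u) atTop (𝓝 1) := by
  have hsmall : Tendsto (fun u => ((log (sampleSize a b c c' t u) - log (covCount a b c c' t u))
      + (log (covLevel a b c c' t u) - log (b * log u)) + log (log u) + (log b - log a))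
      / log u) atTop (𝓝 0) := by
    have h := (((tendsto_log_sampleSize_sub_log_covCount c c' t ha hb).add
      (tendsto_log_covLevel_sub_log c c' t ha hb)).div_atTop tendsto_log_atTop).add
      ((isLittleO_log_id_atTop.tendsto_div_nhds_zero.comp tendsto_log_atTop).add
        ((tendsto_const_nhds (x := log b - log a)).div_atTop tendsto_log_atTop))
    simp only [add_zero] at h
    refine h.congr fun u => ?_
    simp only [Function.comp_apply, id]
    ring
  have hone := hsmall.const_add 1
  rw [add_zero] at hone
  refine hone.congr' ?_
  filter_upwards [eventually_gt_atTop 1,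
    (tendsto_covLevel_atTop c c' t ha hb).eventually_gt_atTop 0]
    with u hu hS
  have hlog_pos : 0 < log u := log_pos hu
  rw [log_covCount c c' t ha (one_pos.trans hu) hS, log_mul hb.ne' hlog_pos.ne']
  field_simp
  ring

theorem tendsto_threshLevel (ha : 0 < a) (hb : 0 < b) :
    Tendsto (threshLevel a b c c' t) atTop (𝓝 t) := by
  have hloglog : Tendsto (fun u => log (log (sampleSize a b c c' t u)) - log (log u))
      atTop (𝓝 0) :=
    tendsto_log_sub_log_of_tendsto_div (tendsto_log_sampleSize_div_log c c' t ha hb)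
      (tendsto_log_atTop.eventually_ne_atTop 0)
  have h := ((((tendsto_mul_sampleSize_div_sub_covLevel c c' t ha hb).sub
    ((tendsto_log_sampleSize_sub_log_covCount c c' t ha hb).const_mul b)).sub
    ((tendsto_log_covLevel_sub_log c c' t ha hb).const_mul b)).sub
    (hloglog.const_mul c)).const_add t
  simp only [mul_zero, sub_zero, add_zero] at h
  refine h.congr' ?_
  filter_upwards [eventually_gt_atTop 1,
    (tendsto_covLevel_atTop c c' t ha hb).eventually_gt_atTop 0]
    with u hu hS
  have hlog_pos : 0 < log u := log_pos hu
  rw [threshLevel, log_covCount c c' t ha (one_pos.trans hu) hS, log_mul hb.ne' hlog_pos.ne']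
  nth_rewrite 1 [covLevel_eq c c' t ha hb (one_pos.trans hu)]
  rw [log_div hb.ne' ha.ne']
  ring

end Asymptotics

theorem coverNum_event_iff_covThresh_event {d : ℕ} {X : ℕ → EuclideanSpace ℝ (Fin d)} {k : ℕ}
    {B : Set (EuclideanSpace ℝ (Fin d))} {a b c c' t r u : ℝ} (hd : d ≠ 0) (ha : 0 < a)
    (hr : 0 < r) (hu : u = (r ^ d)⁻¹) (hS : 0 ≤ covLevel a b c c' t u)
    (hn : 1 ≤ sampleSize a b c c' t u) :
    ((a * r ^ d : ℝ) : EReal) * coverNum X k B r - ((b * Real.log (b / a * u) : ℝ) : EReal)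
        - (((c + b) * Real.log (Real.log u) : ℝ) : EReal) - ((c' : ℝ) : EReal) ≤ ((t : ℝ) : EReal)
      ↔ ((a * sampleSize a b c c' t u : ℝ) : EReal) * covThresh X (sampleSize a b c c' t u) k B ^ d
        - ((b * Real.log (sampleSize a b c c' t u) : ℝ) : EReal)
        - ((c * Real.log (Real.log (sampleSize a b c c' t u)) : ℝ) : EReal) - ((c' : ℝ) : EReal)
        ≤ ((threshLevel a b c c' t u : ℝ) : EReal) := by
  have hard : 0 < a * r ^ d := by positivity
  have hn_pos : 0 < a * sampleSize a b c c' t u := mul_pos ha (by exact_mod_cast hn)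
  have hcount : (t + c' + (c + b) * Real.log (Real.log u) + b * Real.log (b / a * u))
      / (a * r ^ d) = covCount a b c c' t u := by
    rw [covCount, covLevel, hu]
    field_simp
  have hthresh : (threshLevel a b c c' t u + c' + c * Real.log (Real.log (sampleSize a b c c' t u))
      + b * Real.log (sampleSize a b c c' t u)) / (a * sampleSize a b c c' t u) = r ^ d := by
    rw [threshLevel, div_eq_iff hn_pos.ne', hu, div_inv_eq_mul]
    ring
  have hq : 0 ≤ covCount a b c c' t u := div_nonneg (mul_nonneg hS (hu ▸ by positivity)) ha.le
  simp only [EReal.sub_coe_le_coe_iff]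
  rw [EReal.coe_mul_le_coe_iff hard, EReal.coe_mul_le_coe_iff hn_pos, hcount, hthresh,
    coverNum_le_coe_iff_covThresh_le hr hq,
    EReal.pow_le_coe_pow_iff covThresh_nonneg hr.le hd]
  rfl

theorem covering_number_from_coverage_threshold_general
    {d : ℕ} (hd : 1 ≤ d)
    {Ω : Type*} [MeasurableSpace Ω] (P : Measure Ω) [IsProbabilityMeasure P]
    {Ω' : Type*} [MeasurableSpace Ω'] (P' : Measure Ω')
    (B : Set (EuclideanSpace ℝ (Fin d)))
    (X : ℕ → Ω → EuclideanSpace ℝ (Fin d))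
    (k : ℕ)
    (Z : Ω' → ℝ)
    (hZcdf : Continuous (fun t : ℝ => (P' {ω' : Ω' | Z ω' ≤ t}).toReal))
    (a b c c' : ℝ) (ha : 0 < a) (hb : 0 < b)
    (hconv : ∀ t : ℝ,
      Tendsto
        (fun n : ℕ =>
          (P {ω : Ω |
            ((a * (n : ℝ) : ℝ) : EReal) * (covThresh (fun i => X i ω) n k B) ^ d
              - ((b * Real.log (n : ℝ) : ℝ) : EReal)
              - ((c * Real.log (Real.log (n : ℝ)) : ℝ) : EReal)
              - ((c' : ℝ) : EReal)
              ≤ ((t : ℝ) : EReal)}).toReal)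
        atTop (𝓝 ((P' {ω' : Ω' | Z ω' ≤ t}).toReal))) :
    ∀ t : ℝ,
      Tendsto
        (fun r : ℝ =>
          (P {ω : Ω |
            ((a * r ^ d : ℝ) : EReal) * (coverNum (fun i => X i ω) k B r)
              - ((b * Real.log ((b / a) * r ^ (-(d : ℝ))) : ℝ) : EReal)
              - (((c + b) * Real.log (Real.log (r ^ (-(d : ℝ)))) : ℝ) : EReal)
              - ((c' : ℝ) : EReal)
              ≤ ((t : ℝ) : EReal)}).toReal)
        (𝓝[>] (0 : ℝ)) (𝓝 ((P' {ω' : Ω' | Z ω' ≤ t}).toReal)) := by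
  intro t
  have hu : Tendsto (fun r : ℝ => r ^ (-(d : ℝ))) (𝓝[>] 0) atTop :=
    tendsto_rpow_neg_nhdsGT_zero (neg_neg_of_pos (by exact_mod_cast hd))
  refine (tendsto_comp_of_monotone (fun _ => monotone_measure_le_coe_toReal P _) hconv
    hZcdf.continuousAt
    ((tendsto_sampleSize_atTop c c' t ha hb).comp hu)
    ((tendsto_threshLevel c c' t ha hb).comp hu)).congr' ?_
  filter_upwards [self_mem_nhdsWithin,
    hu.eventually ((tendsto_covLevel_atTop c c' t ha hb).eventually_ge_atTop 0),
    hu.eventually ((tendsto_sampleSize_atTop c c' t ha hb).eventually_ge_atTop 1)]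
    with r (hr : 0 < r) hS hn
  have hru : r ^ (-(d : ℝ)) = (r ^ d)⁻¹ := by rw [Real.rpow_neg hr.le, Real.rpow_natCast]
  simp only [Function.comp_apply,
    coverNum_event_iff_covThresh_event (by omega) ha hr hru hS hn]

theorem covering_number_from_coverage_threshold
    {d : ℕ} (hd : 1 ≤ d)
    {Ω : Type*} [MeasurableSpace Ω] (P : Measure Ω) [IsProbabilityMeasure P]
    {Ω' : Type*} [MeasurableSpace Ω'] (P' : Measure Ω') [IsProbabilityMeasure P']
    (A B : Set (EuclideanSpace ℝ (Fin d))) (hAcompact : IsCompact A) (hBA : B ⊆ A)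
    (μ : Measure (EuclideanSpace ℝ (Fin d))) [IsProbabilityMeasure μ] (hμA : μ A = 1)
    (X : ℕ → Ω → EuclideanSpace ℝ (Fin d))
    (hXmeas : ∀ i, Measurable (X i))
    (hXlaw : ∀ i, Measure.map (X i) P = μ)
    (hXindep : ProbabilityTheory.iIndepFun X P)
    (k : ℕ) (hk : 1 ≤ k)
    (Z : Ω' → ℝ)
    (hZcdf : Continuous (fun t : ℝ => (P' {ω' : Ω' | Z ω' ≤ t}).toReal))
    (a b c c' : ℝ) (ha : 0 < a) (hb : 0 < b)
    (hconv : ∀ t : ℝ,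
      Tendsto
        (fun n : ℕ =>
          (P {ω : Ω |
            ((a * (n : ℝ) : ℝ) : EReal) * (covThresh (fun i => X i ω) n k B) ^ d
              - ((b * Real.log (n : ℝ) : ℝ) : EReal)
              - ((c * Real.log (Real.log (n : ℝ)) : ℝ) : EReal)
              - ((c' : ℝ) : EReal)
              ≤ ((t : ℝ) : EReal)}).toReal)
        atTop (𝓝 ((P' {ω' : Ω' | Z ω' ≤ t}).toReal))) :
    ∀ t : ℝ,
      Tendsto
        (fun r : ℝ =>
          (P {ω : Ω |
            ((a * r ^ d : ℝ) : EReal) * (coverNum (fun i => X i ω) k B r)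
              - ((b * Real.log ((b / a) * r ^ (-(d : ℝ))) : ℝ) : EReal)
              - (((c + b) * Real.log (Real.log (r ^ (-(d : ℝ)))) : ℝ) : EReal)
              - ((c' : ℝ) : EReal)
              ≤ ((t : ℝ) : EReal)}).toReal)
        (𝓝[>] (0 : ℝ)) (𝓝 ((P' {ω' : Ω' | Z ω' ≤ t}).toReal)) :=
  covering_number_from_coverage_threshold_general hd P P' B X k Z hZcdf a b c c' ha hb hconv
end
end

section
/- Let (U_{n,k})_{(n,k)∈ℕ×ℕ} be an array of real-valued random variables on a common probability space such that almost surely U_{n+1,k} ≤ U_{n,k} ≤ U_{n,k+1} for all (n,k). Let β ∈ [0,∞), ε > 0, c > 0, and let (k(n))_{n∈ℕ} be an ℕ-valued sequence with k(n)/log n → β as n → ∞. (a) If P[ n·U_{n,⌊(β+ε)·log n⌋} > log n ] ≤ c·n^{−ε} for all but finitely many n, then almost surely limsup_{n→∞} n·U_{n,k(n)}/log n ≤ 1. (b) If ε < β and P[ n·U_{n,⌈(β−ε)·log n⌉} ≤ log n ] ≤ c·n^{−ε} for all but finitely many n, then almost surely liminf_{n→∞} n·U_{n,k(n)}/log n ≥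 1. -/
/-!
Along the polynomial subsequence `N m = (m + 1) ^ p` with `p * ε > 1` the bounds `c * N m ^ (-ε)`
are summable, so by Borel–Cantelli the bound on `N m * U (N m) k` fails only finitely often.
Monotonicity in `n` and `k` carries it from the block ends `N m`, `N (m + 1)` to every `n` in
between: since `N (m + 1) / N m → 1` this costs a factor arbitrarily close to `1`, and since
`log N (m + 1) - log N m → 0` the index window `(β ± ε) log N m` still contains `kseq n`.
-/

open MeasureTheory Filter Topology Real

theorem MeasureTheory.ae_eventually_notMem_of_summable {α : Type*} [MeasurableSpace α]
    {μ : Measure α} {s : ℕ → Set α} {b : ℕ → ℝ} (hb : Summable b)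
    (h : ∀ᶠ m in atTop, μ (s m) ≤ ENNReal.ofReal (b m)) :
    ∀ᵐ ω ∂μ, ∀ᶠ m in atTop, ω ∉ s m := by
  obtain ⟨M, hM⟩ := eventually_atTop.1 h
  have htail : ∑' m, μ (s (m + M)) ≠ ⊤ := by
    refine ne_top_of_le_ne_top ?_ (ENNReal.tsum_le_tsum fun m =>
      (hM _ (Nat.le_add_left _ _)).trans (ENNReal.ofReal_le_ofReal (le_abs_self _)))
    rw [← ENNReal.ofReal_tsum_of_nonneg (fun _ => abs_nonneg _)
      ((summable_nat_add_iff M).2 hb.abs)]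
    exact ENNReal.ofReal_ne_top
  filter_upwards [ae_eventually_notMem htail] with ω hω
  rw [← map_add_atTop_eq_nat M]
  exact hω

theorem EReal.limsup_coe_le_of_forall_lt {α : Type*} {l : Filter α} {f : α → ℝ} {x : ℝ}
    (h : ∀ r, x < r → ∀ᶠ n in l, f n ≤ r) :
    limsup (fun n => (f n : EReal)) l ≤ x := by
  refine EReal.le_of_forall_lt_iff_le.1 fun r hr => limsup_le_of_le (by isBoundedDefault) ?_
  exact (h r (EReal.coe_lt_coe_iff.1 hr)).mono fun n hn => EReal.coe_le_coe_iff.2 hn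

theorem EReal.le_liminf_coe_of_forall_mem_Ioo {α : Type*} {l : Filter α} {f : α → ℝ}
    {x y : ℝ} (hyx : y < x) (h : ∀ r ∈ Set.Ioo y x, ∀ᶠ n in l, r ≤ f n) :
    (x : EReal) ≤ liminf (fun n => (f n : EReal)) l := by
  refine EReal.ge_of_forall_gt_iff_ge.1 fun z hz => ?_
  have hzx : z < x := EReal.coe_lt_coe_iff.1 hz
  set r := max z ((y + x) / 2)
  have hr : r ∈ Set.Ioo y x := ⟨lt_max_of_lt_right (by linarith), max_lt hzx (by linarith)⟩
  calc (z : EReal) ≤ r := EReal.coe_le_coe_iff.2 (le_max_left _ _)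
    _ ≤ _ := le_liminf_of_le (by isBoundedDefault)
        ((h r hr).mono fun n hn => EReal.coe_le_coe_iff.2 hn)

theorem eventually_le_mul_log_of_tendsto {f : ℕ → ℝ} {β a : ℝ}
    (hf : Tendsto (fun n : ℕ => f n / log n) atTop (𝓝 β)) (ha : β < a) :
    ∀ᶠ n : ℕ in atTop, f n ≤ a * log n := by
  filter_upwards [hf.eventually (eventually_le_nhds ha), eventually_gt_atTop 1] with n hn hn1
  exact (div_le_iff₀ (log_pos (by exact_mod_cast hn1))).1 hn

theorem eventually_mul_log_le_of_tendsto {f : ℕ → ℝ} {β a : ℝ}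
    (hf : Tendsto (fun n : ℕ => f n / log n) atTop (𝓝 β)) (ha : a < β) :
    ∀ᶠ n : ℕ in atTop, a * log n ≤ f n := by
  filter_upwards [hf.eventually (eventually_ge_nhds ha), eventually_gt_atTop 1] with n hn hn1
  exact (le_div_iff₀ (log_pos (by exact_mod_cast hn1))).1 hn

theorem exists_strictMono_tendsto_div_succ_summable_rpow_neg {ε : ℝ} (hε : 0 < ε) :
    ∃ N : ℕ → ℕ, StrictMono N ∧
      Tendsto (fun m => (N m : ℝ) / N (m + 1)) atTop (𝓝 1) ∧
      Summable fun m => (N m : ℝ) ^ (-ε) := by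
  obtain ⟨p, hp⟩ := exists_nat_gt ε⁻¹
  have hp0 : p ≠ 0 := by rintro rfl; exact (inv_pos.2 hε).not_ge (by simpa using hp.le)
  refine ⟨fun m => (m + 1) ^ p, fun a b hab => Nat.pow_lt_pow_left (by omega) hp0, ?_, ?_⟩
  · have h := ((tendsto_natCast_div_add_atTop (1 : ℝ)).comp (tendsto_add_atTop_nat 1)).pow p
    rw [one_pow] at h
    refine h.congr fun m => ?_
    simp only [Function.comp_apply]
    push_cast
    rw [div_pow]
  · have hpε : -((p : ℝ) * ε) < -1 := by
      have := (inv_lt_iff_one_lt_mul₀ hε).1 hp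
      linarith
    refine ((summable_nat_add_iff 1).2 (Real.summable_nat_rpow.2 hpε)).congr fun m => ?_
    push_cast
    rw [← Real.rpow_natCast, ← Real.rpow_mul (by positivity), neg_mul_eq_mul_neg]

section Subsequence

variable {N : ℕ → ℕ}

theorem eventually_mul_le_of_tendsto_div_succ (hN : StrictMono N)
    (hratio : Tendsto (fun m => (N m : ℝ) / N (m + 1)) atTop (𝓝 1)) {r : ℝ} (hr : r < 1) :
    ∀ᶠ m in atTop, r * N (m + 1) ≤ N m := by
  filter_upwards [hratio.eventually (eventually_ge_nhds hr)] with m hm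
  exact (le_div_iff₀ (Nat.cast_pos.2 ((Nat.zero_le _).trans_lt (hN m.lt_succ_self)))).1 hm

theorem eventually_mul_log_succ_le (hN : StrictMono N)
    (hratio : Tendsto (fun m => (N m : ℝ) / N (m + 1)) atTop (𝓝 1)) {a b : ℝ} (hab : a < b) :
    ∀ᶠ m in atTop, a * log (N (m + 1)) ≤ b * log (N m) := by
  have hNtop : Tendsto (fun m => (N m : ℝ)) atTop atTop :=
    tendsto_natCast_atTop_atTop.comp hN.tendsto_atTop
  have hdiff : Tendsto (fun m => log (N (m + 1)) - log (N m)) atTop (𝓝 0) := by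
    have h := ((continuousAt_log one_ne_zero).tendsto.comp hratio).neg
    rw [log_one, neg_zero] at h
    refine h.congr' ?_
    filter_upwards [hNtop.eventually_gt_atTop 0] with m hm
    have hm1 : (0 : ℝ) < N (m + 1) := hm.trans (Nat.cast_lt.2 (hN m.lt_succ_self))
    simp only [Function.comp_apply]
    rw [log_div hm.ne' hm1.ne']
    ring
  have hgap : Tendsto (fun m => a * (log (N (m + 1)) - log (N m)) + -((b - a) * log (N m)))
      atTop atBot :=
    (hdiff.const_mul a).add_atBot (tendsto_neg_atTop_atBot.comp
      ((tendsto_log_atTop.comp hNtop).const_mul_atTop (sub_pos.2 hab)))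
  filter_upwards [hgap.eventually_le_atBot 0] with m hm
  linarith

/-- The index `m` of the block `[N m, N (m + 1))` containing `n` (for `n ≥ N 0`). -/
def blockIndex (N : ℕ → ℕ) (n : ℕ) : ℕ := Nat.findGreatest (fun j => N j ≤ n) n

theorem blockIndex_le {n : ℕ} (hn : N 0 ≤ n) : N (blockIndex N n) ≤ n :=
  Nat.findGreatest_spec (P := fun j => N j ≤ n) (Nat.zero_le n) hn

theorem lt_blockIndex_succ (hN : StrictMono N) (n : ℕ) : n < N (blockIndex N n + 1) := by
  by_contra! h
  exact (blockIndex N n).lt_succ_self.not_ge (Nat.le_findGreatest ((hN.id_le _).trans h) h)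

theorem tendsto_blockIndex (hN : StrictMono N) : Tendsto (blockIndex N) atTop atTop :=
  tendsto_atTop_atTop.2 fun M =>
    ⟨N M, fun _ hn => Nat.le_findGreatest ((hN.id_le M).trans hn) hn⟩

end Subsequence

section Sandwich

variable {u : ℕ → ℕ → ℝ}

theorem mul_le_of_earlier_bound (hu_n : ∀ k, Antitone (u · k)) (hu_k : ∀ n, Monotone (u n))
    {n₀ n n₁ k k₀ : ℕ} {L r : ℝ} (hn₀ : n₀ ≤ n) (hn₁ : n ≤ n₁)
    (hk : k ≤ k₀) (hpos : (0 : ℝ) < n₀) (hL : 0 ≤ L) (hbound : n₀ * u n₀ k₀ ≤ L)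
    (hr : (n₁ : ℝ) ≤ r * n₀) : n * u n k ≤ r * L := by
  have hu : u n k ≤ L / n₀ :=
    ((hu_n k hn₀).trans (hu_k n₀ hk)).trans ((le_div_iff₀' hpos).2 hbound)
  have hL' : 0 ≤ L / n₀ := div_nonneg hL hpos.le
  calc n * u n k ≤ n * (L / n₀) := by gcongr
    _ ≤ n₁ * (L / n₀) := by gcongr
    _ ≤ r * n₀ * (L / n₀) := by gcongr
    _ = r * L := by field_simp

theorem le_mul_of_later_bound (hu_n : ∀ k, Antitone (u · k)) (hu_k : ∀ n, Monotone (u n))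
    {n₀ n n₁ k k₁ : ℕ} {L r : ℝ} (hn₀ : n₀ ≤ n) (hn₁ : n ≤ n₁)
    (hk : k₁ ≤ k) (hpos : (0 : ℝ) < n₁) (hL : 0 ≤ L) (hbound : L ≤ n₁ * u n₁ k₁)
    (hr : r * n₁ ≤ n₀) : r * L ≤ n * u n k := by
  have hu : L / n₁ ≤ u n k :=
    ((div_le_iff₀' hpos).2 hbound).trans ((hu_k n₁ hk).trans (hu_n k hn₁))
  have hL' : 0 ≤ L / n₁ := div_nonneg hL hpos.le
  calc r * L = r * n₁ * (L / n₁) := by field_simp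
    _ ≤ n₀ * (L / n₁) := by gcongr
    _ ≤ n * (L / n₁) := by gcongr
    _ ≤ n * u n k := by gcongr

end Sandwich

section Interpolation

variable {N : ℕ → ℕ} {u : ℕ → ℕ → ℝ} {kk : ℕ → ℕ} {a b : ℝ}

theorem limsup_mul_div_log_le_one (hN : StrictMono N)
    (hratio : Tendsto (fun m => (N m : ℝ) / N (m + 1)) atTop (𝓝 1))
    (hu_n : ∀ k, Antitone (u · k)) (hu_k : ∀ n, Monotone (u n)) (ha : 0 ≤ a) (hab : a < b)
    (hk : ∀ᶠ n : ℕ in atTop, (kk n : ℝ) ≤ a * log n)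
    (hbound : ∀ᶠ m in atTop, N m * u (N m) ⌊b * log (N m)⌋₊ ≤ log (N m)) :
    limsup (fun n : ℕ => ((n * u n (kk n) / log n : ℝ) : EReal)) atTop ≤ 1 := by
  refine EReal.limsup_coe_le_of_forall_lt fun r hr => ?_
  have hr0 : 0 < r := by linarith
  have hm := tendsto_blockIndex hN
  filter_upwards [hk, eventually_ge_atTop (N 0), eventually_gt_atTop 1, hm.eventually hbound,
    hm.eventually (eventually_mul_log_succ_le hN hratio hab),
    hm.eventually (eventually_mul_le_of_tendsto_div_succ hN hratio (inv_lt_one_of_one_lt₀ hr)),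
    hm.eventually (hN.tendsto_atTop.eventually_gt_atTop 0)]
    with n hkn hn0 hn1 hbn hwin hrat hpos
  set m := blockIndex N n
  have hNm : (N m : ℝ) ≤ n := by exact_mod_cast blockIndex_le hn0
  have hn : (n : ℝ) ≤ N (m + 1) := by exact_mod_cast (lt_blockIndex_succ hN n).le
  have hpos' : (0 : ℝ) < N m := by exact_mod_cast hpos
  have hkk : kk n ≤ ⌊b * log (N m)⌋₊ := Nat.le_floor <| calc
    (kk n : ℝ) ≤ a * log n := hkn
    _ ≤ a * log (N (m + 1)) := by gcongr
    _ ≤ b * log (N m) := hwin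
  rw [div_le_iff₀ (log_pos (by exact_mod_cast hn1))]
  calc n * u n (kk n) ≤ r * log (N m) :=
        mul_le_of_earlier_bound hu_n hu_k (blockIndex_le hn0) (lt_blockIndex_succ hN n).le hkk
          hpos' (log_natCast_nonneg _) hbn ((inv_mul_le_iff₀ hr0).1 hrat)
    _ ≤ r * log n := by gcongr

theorem one_le_liminf_mul_div_log (hN : StrictMono N)
    (hratio : Tendsto (fun m => (N m : ℝ) / N (m + 1)) atTop (𝓝 1))
    (hu_n : ∀ k, Antitone (u · k)) (hu_k : ∀ n, Monotone (u n)) (ha : 0 ≤ a) (hba : b < a)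
    (hk : ∀ᶠ n : ℕ in atTop, a * log n ≤ kk n)
    (hbound : ∀ᶠ m in atTop, log (N m) < N m * u (N m) ⌈b * log (N m)⌉₊) :
    1 ≤ liminf (fun n : ℕ => ((n * u n (kk n) / log n : ℝ) : EReal)) atTop := by
  refine EReal.le_liminf_coe_of_forall_mem_Ioo zero_lt_one fun r hr => ?_
  have hm := tendsto_blockIndex hN
  filter_upwards [hk, eventually_ge_atTop (N 0), eventually_gt_atTop 1,
    hm.eventually ((tendsto_add_atTop_nat 1).eventually hbound),
    hm.eventually (eventually_mul_log_succ_le hN hratio hba),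
    hm.eventually (eventually_mul_le_of_tendsto_div_succ hN hratio hr.2),
    hm.eventually (hN.tendsto_atTop.eventually_gt_atTop 0)]
    with n hkn hn0 hn1 hbn hwin hrat hpos
  set m := blockIndex N n
  have hNm : (N m : ℝ) ≤ n := by exact_mod_cast blockIndex_le hn0
  have hn : (n : ℝ) ≤ N (m + 1) := by exact_mod_cast (lt_blockIndex_succ hN n).le
  have hpos' : (0 : ℝ) < N m := by exact_mod_cast hpos
  have hkk : ⌈b * log (N (m + 1))⌉₊ ≤ kk n := Nat.ceil_le.2 <| calc
    b * log (N (m + 1)) ≤ a * log (N m) := hwin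
    _ ≤ a * log n := by gcongr
    _ ≤ kk n := hkn
  rw [le_div_iff₀ (log_pos (by exact_mod_cast hn1))]
  calc r * log n ≤ r * log (N (m + 1)) := by gcongr; exact hr.1.le
    _ ≤ n * u n (kk n) :=
        le_mul_of_later_bound hu_n hu_k (blockIndex_le hn0) (lt_blockIndex_succ hN n).le hkk
          (by linarith) (log_natCast_nonneg _) hbn.le hrat

end Interpolation

theorem subsequence_trick_general
    {Ω : Type*} [MeasurableSpace Ω] (P : Measure Ω) [IsProbabilityMeasure P]
    (U : ℕ → ℕ → Ω → ℝ)
    (hmono : ∀ᵐ ω ∂P, ∀ n k : ℕ, U (n + 1) k ω ≤ U n k ω ∧ U n k ω ≤ U n (k + 1) ω)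
    (β : ℝ) (hβ : 0 ≤ β) (ε : ℝ) (hε : 0 < ε) (c : ℝ)
    (kseq : ℕ → ℕ)
    (hk : Tendsto (fun n : ℕ => (kseq n : ℝ) / Real.log n) atTop (𝓝 β)) :
    ((∀ᶠ n : ℕ in atTop,
        P {ω : Ω | Real.log n < (n : ℝ) * U n ⌊(β + ε) * Real.log n⌋₊ ω} ≤
          ENNReal.ofReal (c * (n : ℝ) ^ (-ε))) →
      ∀ᵐ ω ∂P,
        Filter.limsup (fun n : ℕ => (((n : ℝ) * U n (kseq n) ω / Real.log n : ℝ) : EReal))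
          atTop ≤ (1 : EReal)) ∧
    (ε < β →
      (∀ᶠ n : ℕ in atTop,
        P {ω : Ω | (n : ℝ) * U n ⌈(β - ε) * Real.log n⌉₊ ω ≤ Real.log n} ≤
          ENNReal.ofReal (c * (n : ℝ) ^ (-ε))) →
      ∀ᵐ ω ∂P,
        (1 : EReal) ≤
          Filter.liminf (fun n : ℕ => (((n : ℝ) * U n (kseq n) ω / Real.log n : ℝ) : EReal))
            atTop) := by
  obtain ⟨N, hN, hratio, hsum⟩ := exists_strictMono_tendsto_div_succ_summable_rpow_neg hε
  have hmono' : ∀ᵐ ω ∂P, (∀ k, Antitone (U · k ω)) ∧ ∀ n, Monotone (U n · ω) :=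
    hmono.mono fun ω h => ⟨fun k => antitone_nat_of_succ_le fun n => (h n k).1,
      fun n => monotone_nat_of_le_succ fun k => (h n k).2⟩
  constructor
  · intro hprob
    filter_upwards [hmono', ae_eventually_notMem_of_summable (hsum.mul_left c)
      (hN.tendsto_atTop.eventually hprob)] with ω ⟨hU_n, hU_k⟩ hω
    exact limsup_mul_div_log_le_one (u := fun n k => U n k ω) hN hratio hU_n hU_k
      (by linarith) (by linarith : β + ε / 2 < β + ε)
      (eventually_le_mul_log_of_tendsto hk (by linarith)) (hω.mono fun _ => not_lt.1)
  · intro hεβ hprob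
    filter_upwards [hmono', ae_eventually_notMem_of_summable (hsum.mul_left c)
      (hN.tendsto_atTop.eventually hprob)] with ω ⟨hU_n, hU_k⟩ hω
    exact one_le_liminf_mul_div_log (u := fun n k => U n k ω) hN hratio hU_n hU_k
      (by linarith) (by linarith : β - ε < β - ε / 2)
      (eventually_mul_log_le_of_tendsto hk (by linarith)) (hω.mono fun _ => not_le.1)

theorem subsequence_trick
    {Ω : Type*} [MeasurableSpace Ω] (P : Measure Ω) [IsProbabilityMeasure P]
    (U : ℕ → ℕ → Ω → ℝ)
    (hmono : ∀ᵐ ω ∂P, ∀ n k : ℕ, U (n + 1) k ω ≤ U n k ω ∧ U n k ω ≤ U n (k + 1) ω)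
    (β : ℝ) (hβ : 0 ≤ β) (ε : ℝ) (hε : 0 < ε) (c : ℝ) (hc : 0 < c)
    (kseq : ℕ → ℕ)
    (hk : Tendsto (fun n : ℕ => (kseq n : ℝ) / Real.log n) atTop (𝓝 β)) :
    ((∀ᶠ n : ℕ in atTop,
        P {ω : Ω | Real.log n < (n : ℝ) * U n ⌊(β + ε) * Real.log n⌋₊ ω} ≤
          ENNReal.ofReal (c * (n : ℝ) ^ (-ε))) →
      ∀ᵐ ω ∂P,
        Filter.limsup (fun n : ℕ => (((n : ℝ) * U n (kseq n) ω / Real.log n : ℝ) : EReal))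
          atTop ≤ (1 : EReal)) ∧
    (ε < β →
      (∀ᶠ n : ℕ in atTop,
        P {ω : Ω | (n : ℝ) * U n ⌈(β - ε) * Real.log n⌉₊ ω ≤ Real.log n} ≤
          ENNReal.ofReal (c * (n : ℝ) ^ (-ε))) →
      ∀ᵐ ω ∂P,
        (1 : EReal) ≤
          Filter.liminf (fun n : ℕ => (((n : ℝ) * U n (kseq n) ω / Real.log n : ℝ) : EReal))
            atTop) :=
  subsequence_trick_general P U hmono β hβ ε hε c kseq hk
end

section
/- Let d ≥ 1, let A ⊂ ℝ^d be compact, let μ be a Borel probability measure with μ(A) = 1 admitting a Lebesgue density f, and let B ⊆ A be Riemann measurable with μ(B) > 0. Set f_0 := ess inf_{x∈B} f(x) and let α > f_0. Then liminf_{r→0+} r^d·ν(B, r, α·θ_d·r^d) > 0; that is, there exist c > 0 and r_0 > 0 such that ν(B,r,α·θ_d·r^d) ≥ c·r^{−d} for all 0 < r < r_0. -/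
/-!
Pick `f₀ < β < α`. As `f₀` is the essential infimum, `f < β` on a non-null part `S` of `B`, so
`μ(T) ≤ β · vol(T)` on subsets of `S` and hence the Radon–Nikodym derivative of `μ` is `< α` on a
non-null part of `S`. By the Besicovitch differentiation theorem, `μ(B(x, r)) ≤ α θ_d r^d` for all
`r < r₀` on a non-null set `W ⊆ B`, with `r₀` uniform. A maximal `2r`-separated subset of `W` is
centred at disjoint `r`-balls, and the `2r`-balls around it cover `W`; so at least
`vol(W) / (θ_d (2r)^d)` admissible balls can be packed.
-/

open MeasureTheory Metric Filter Topology ENNReal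

noncomputable section

/-- `θ_d`, the volume of the unit ball in `ℝ^d`. -/
def ballVol (d : ℕ) : ℝ := Real.pi ^ ((d : ℝ) / 2) / Real.Gamma (1 + (d : ℝ) / 2)

/-- The packing number `ν(B, r, a')`: the largest number of pairwise disjoint closed balls of
radius `r` centred at points of `B`, each of `μ`-measure at most `a'`. -/
def packNum {d : ℕ} (μ : Measure (EuclideanSpace ℝ (Fin d)))
    (B : Set (EuclideanSpace ℝ (Fin d))) (r a' : ℝ) : ℕ :=
  sSup {m : ℕ | ∃ s : Finset (EuclideanSpace ℝ (Fin d)), s.card = m ∧ ↑s ⊆ B ∧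
    (↑s : Set (EuclideanSpace ℝ (Fin d))).Pairwise
      (fun x y => Disjoint (closedBall x r) (closedBall y r)) ∧
    ∀ x ∈ s, μ (closedBall x r) ≤ ENNReal.ofReal a'}

open Set

lemma ballVol_pos (d : ℕ) : 0 < ballVol d :=
  div_pos (Real.rpow_pos_of_pos Real.pi_pos _) (Real.Gamma_pos_of_pos (by positivity))

lemma volume_closedBall_eq_ballVol {d : ℕ} (hd : 1 ≤ d) (x : EuclideanSpace ℝ (Fin d)) {r : ℝ}
    (hr : 0 ≤ r) : volume (closedBall x r) = ENNReal.ofReal (ballVol d * r ^ d) := by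
  have : Nonempty (Fin d) := ⟨⟨0, hd⟩⟩
  have hpi : Real.sqrt Real.pi ^ d = Real.pi ^ ((d : ℝ) / 2) := by
    rw [Real.sqrt_eq_rpow, ← Real.rpow_natCast, ← Real.rpow_mul Real.pi_pos.le]
    ring_nf
  rw [EuclideanSpace.volume_closedBall, Fintype.card_fin, hpi, add_comm, ← ballVol,
    ← ENNReal.ofReal_pow hr, mul_comm, ENNReal.ofReal_mul (ballVol_pos d).le]

lemma measure_setOf_lt_ne_zero_of_essInf_lt {α : Type*} [MeasurableSpace α] {ν : Measure α}
    (hν : ν ≠ 0) {f : α → ℝ} {b : ℝ} (hb : essInf f ν < b) : ν {x | f x < b} ≠ 0 := by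
  intro hnull
  obtain ⟨n, hn⟩ : ∃ n : ℕ, ν {x | f x ≤ n} ≠ 0 := by
    by_contra! h
    refine hν (Measure.measure_univ_eq_zero.1 ?_)
    rw [← iUnion_eq_univ_iff.2 fun x => exists_nat_ge (f x)]
    exact measure_iUnion_null h
  have hcobdd : IsCoboundedUnder (· ≥ ·) (ae ν) f :=
    IsCoboundedUnder.of_frequently_le (a := (n : ℝ)) (frequently_ae_iff.2 hn)
  exact hb.not_ge (le_essInf_of_ae_le b
    (measure_mono_null (fun x (hx : ¬ b ≤ f x) => lt_of_not_ge hx) hnull) hcobdd)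

section Separated

variable {X : Type*}

lemma TotallyBounded.packingNumber_ne_top [PseudoEMetricSpace X] {A : Set X}
    (hA : TotallyBounded A) {ε : NNReal} (hε : ε ≠ 0) : packingNumber ε A ≠ ⊤ := by
  obtain ⟨C, -, hCfin, hC⟩ := exists_finite_isCover_of_totallyBounded (ε := ε / 2)
    (div_ne_zero hε two_ne_zero) hA
  refine ne_top_of_le_ne_top hCfin.encard_lt_top.ne ?_
  calc packingNumber ε A = packingNumber (2 * (ε / 2)) A := by rw [mul_div_cancel₀ _ two_ne_zero]
    _ ≤ externalCoveringNumber (ε / 2) A := packingNumber_two_mul_le_externalCoveringNumber _ _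
    _ ≤ C.encard := hC.externalCoveringNumber_le_encard

lemma TotallyBounded.exists_finset_isSeparated_isCover [PseudoEMetricSpace X] {A : Set X}
    (hA : TotallyBounded A) {ε : NNReal} (hε : ε ≠ 0) :
    ∃ C : Finset X, ↑C ⊆ A ∧ IsSeparated ε (C : Set X) ∧ IsCover ε A C := by
  have htop := hA.packingNumber_ne_top hε
  have hfin : (maximalSeparatedSet ε A).Finite :=
    Set.encard_ne_top_iff.1 (encard_maximalSeparatedSet htop ▸ htop)
  refine ⟨hfin.toFinset, ?_, ?_, ?_⟩ <;> rw [Finite.coe_toFinset]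
  exacts [maximalSeparatedSet_subset, isSeparated_maximalSeparatedSet,
    isCover_maximalSeparatedSet htop]

lemma isSeparated_of_pairwise_disjoint_closedBall [PseudoMetricSpace X] {r : ℝ} (hr : 0 ≤ r)
    {s : Set X} (hs : s.Pairwise fun x y => Disjoint (closedBall x r) (closedBall y r)) :
    IsSeparated (ENNReal.ofReal r) s := by
  intro x hx y hy hxy
  rw [edist_dist, ENNReal.ofReal_lt_ofReal_iff_of_nonneg hr]
  exact lt_of_not_ge fun h => (hs hx hy hxy).notMem_of_mem_left (mem_closedBall_self hr) h

end Separated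

section Packing

variable {d : ℕ} {μ : Measure (EuclideanSpace ℝ (Fin d))} {B : Set (EuclideanSpace ℝ (Fin d))}
  {r a' : ℝ}

lemma card_le_packNum (hB : TotallyBounded B) (hr : 0 < r)
    {s : Finset (EuclideanSpace ℝ (Fin d))} (hsB : ↑s ⊆ B)
    (hs : (s : Set (EuclideanSpace ℝ (Fin d))).Pairwise
      fun x y => Disjoint (closedBall x r) (closedBall y r))
    (hμs : ∀ x ∈ s, μ (closedBall x r) ≤ ENNReal.ofReal a') :
    s.card ≤ packNum μ B r a' := by
  refine le_csSup ?_ ⟨s, rfl, hsB, hs, hμs⟩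
  obtain ⟨N, hN⟩ := ENat.ne_top_iff_exists.1
    (hB.packingNumber_ne_top (ε := r.toNNReal) (by simpa using hr))
  refine ⟨N, ?_⟩
  rintro _ ⟨t, rfl, htB, ht, -⟩
  have := (isSeparated_of_pairwise_disjoint_closedBall hr.le ht).encard_le_packingNumber htB
  rw [Set.encard_coe_eq_coe_finsetCard, ← hN] at this
  exact_mod_cast this

lemma volume_le_packNum_mul (hd : 1 ≤ d) (hB : TotallyBounded B)
    {W : Set (EuclideanSpace ℝ (Fin d))} (hWB : W ⊆ B) (hr : 0 < r)
    (hW : ∀ x ∈ W, μ (closedBall x r) ≤ ENNReal.ofReal a') :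
    volume W ≤ packNum μ B r a' * ENNReal.ofReal (ballVol d * (2 * r) ^ d) := by
  obtain ⟨C, hCW, hCsep, hCcover⟩ := (hB.subset hWB).exists_finset_isSeparated_isCover
    (ε := (2 * r).toNNReal) (by simpa using hr)
  have hdisj : (C : Set (EuclideanSpace ℝ (Fin d))).Pairwise
      fun x y => Disjoint (closedBall x r) (closedBall y r) := by
    intro x hx y hy hxy
    have h2r : ENNReal.ofReal (2 * r) < edist x y := hCsep hx hy hxy
    rw [edist_dist, ENNReal.ofReal_lt_ofReal_iff_of_nonneg (by positivity)] at h2r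
    exact closedBall_disjoint_closedBall (by linarith)
  have hcard := card_le_packNum hB hr (hCW.trans hWB) hdisj fun x hx => hW x (hCW hx)
  calc volume W ≤ volume (⋃ y ∈ C, closedBall y (2 * r)) := by
        refine measure_mono ?_
        simpa [hr.le] using hCcover.subset_iUnion_closedBall
    _ ≤ ∑ y ∈ C, volume (closedBall y (2 * r)) := measure_biUnion_finset_le _ _
    _ = C.card * ENNReal.ofReal (ballVol d * (2 * r) ^ d) := by
        simp [volume_closedBall_eq_ballVol hd _ (by positivity : 0 ≤ 2 * r)]
    _ ≤ packNum μ B r a' * ENNReal.ofReal (ballVol d * (2 * r) ^ d) := by gcongr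

lemma toReal_volume_div_mul_rpow_le_packNum (hd : 1 ≤ d) (hB : TotallyBounded B)
    {W : Set (EuclideanSpace ℝ (Fin d))} (hWB : W ⊆ B) (hr : 0 < r)
    (hW : ∀ x ∈ W, μ (closedBall x r) ≤ ENNReal.ofReal a') :
    (volume W).toReal / (ballVol d * 2 ^ d) * r ^ (-(d : ℝ)) ≤ packNum μ B r a' := by
  have hθ := ballVol_pos d
  have hcount := ENNReal.toReal_mono (by finiteness) (volume_le_packNum_mul hd hB hWB hr hW)
  rw [ENNReal.toReal_mul, ENNReal.toReal_natCast, ENNReal.toReal_ofReal (by positivity),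
    mul_pow] at hcount
  rw [Real.rpow_neg hr.le, Real.rpow_natCast, ← div_eq_mul_inv,
    div_le_iff₀ (by positivity), div_le_iff₀ (by positivity)]
  linarith

end Packing

lemma measure_inter_setOf_rnDeriv_lt_ne_zero {α : Type*} [MeasurableSpace α] {μ ν : Measure α}
    [SigmaFinite μ] [SigmaFinite ν] {F : α → ℝ≥0∞} (hμ : μ = ν.withDensity F) {S : Set α}
    (hS : ν S ≠ 0) (hS' : ν S ≠ ∞) {b c : ℝ≥0∞} (hF : ∀ x ∈ S, F x ≤ b) (hbc : b < c) :
    ν (S ∩ {x | μ.rnDeriv ν x < c}) ≠ 0 := by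
  intro hnull
  have hac : μ ≪ ν := hμ ▸ withDensity_absolutelyContinuous ν F
  have hupper : μ S ≤ b * ν S := by
    rw [hμ, withDensity_apply', ← setLIntegral_const]
    exact setLIntegral_mono measurable_const hF
  -- `F` need not be measurable, so the lower bound goes through the measurable density.
  have hlower : c * ν S ≤ μ S := by
    rw [← Measure.withDensity_rnDeriv_eq μ ν hac, withDensity_apply', ← setLIntegral_const]
    refine setLIntegral_mono_ae (Measure.measurable_rnDeriv μ ν).aemeasurable ?_
    refine measure_mono_null (fun x hx => ?_) hnull
    obtain ⟨hxS, hxc⟩ := Classical.not_imp.1 hx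
    exact ⟨hxS, lt_of_not_ge hxc⟩
  exact hbc.not_ge ((ENNReal.mul_le_mul_iff_left hS hS').1 (hlower.trans hupper))

lemma exists_measure_setOf_forall_Ioo_ne_zero {α : Type*} [MeasurableSpace α] {ν : Measure α}
    {S : Set α} (hS : ν S ≠ 0) {P : α → ℝ → Prop}
    (hP : ∀ᵐ x ∂ν, x ∈ S → ∀ᶠ r in 𝓝[>] 0, P x r) :
    ∃ r₀ > 0, ν {x ∈ S | ∀ r ∈ Ioo 0 r₀, P x r} ≠ 0 := by
  by_contra! h
  have hcover : S ⊆ {x | ¬(x ∈ S → ∀ᶠ r in 𝓝[>] 0, P x r)} ∪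
      ⋃ n : ℕ, {x ∈ S | ∀ r ∈ Ioo 0 (1 / (n + 1 : ℝ)), P x r} := by
    intro x hx
    by_cases hxP : ∀ᶠ r in 𝓝[>] 0, P x r
    · obtain ⟨ε, hε, hsub⟩ := mem_nhdsGT_iff_exists_Ioo_subset.1 hxP
      obtain ⟨n, hn⟩ := exists_nat_one_div_lt (mem_Ioi.1 hε)
      exact Or.inr (mem_iUnion.2 ⟨n, hx, fun r hr => hsub ⟨hr.1, hr.2.trans hn⟩⟩)
    · exact Or.inl fun h => hxP (h hx)
  exact hS (measure_mono_null hcover (measure_union_null (ae_iff.1 hP)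
    (measure_iUnion_null fun n => h _ Nat.one_div_pos_of_nat)))

lemma ae_eventually_measure_closedBall_le {d : ℕ} (hd : 1 ≤ d)
    (μ : Measure (EuclideanSpace ℝ (Fin d))) [IsLocallyFiniteMeasure μ] :
    ∀ᵐ x, ∀ α : ℝ, μ.rnDeriv volume x < ENNReal.ofReal α →
      ∀ᶠ r in 𝓝[>] 0, μ (closedBall x r) ≤ ENNReal.ofReal (α * ballVol d * r ^ d) := by
  filter_upwards [Besicovitch.ae_tendsto_rnDeriv μ volume] with x hx α hα
  have hα0 : 0 ≤ α := by
    by_contra! h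
    simp [ENNReal.ofReal_of_nonpos h.le] at hα
  filter_upwards [hx (Iio_mem_nhds hα), self_mem_nhdsWithin] with r hr (hr0 : 0 < r)
  rw [mul_assoc, ENNReal.ofReal_mul hα0, ← volume_closedBall_eq_ballVol hd x hr0.le]
  exact (ENNReal.div_le_iff_le_mul (Or.inl (measure_closedBall_pos volume x hr0).ne')
    (Or.inl measure_closedBall_lt_top.ne)).1 hr.le

lemma exists_measure_ne_zero_forall_measure_closedBall_le {d : ℕ} (hd : 1 ≤ d)
    {μ : Measure (EuclideanSpace ℝ (Fin d))} [IsFiniteMeasure μ]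
    {F : EuclideanSpace ℝ (Fin d) → ℝ≥0∞} (hμ : μ = volume.withDensity F)
    {S : Set (EuclideanSpace ℝ (Fin d))} (hS : volume S ≠ 0) (hS' : volume S ≠ ∞) {b : ℝ≥0∞}
    (hF : ∀ x ∈ S, F x ≤ b) {α : ℝ} (hbα : b < ENNReal.ofReal α) :
    ∃ r₀ > 0, ∃ W ⊆ S, volume W ≠ 0 ∧
      ∀ x ∈ W, ∀ r ∈ Ioo 0 r₀, μ (closedBall x r) ≤ ENNReal.ofReal (α * ballVol d * r ^ d) := by
  obtain ⟨r₀, hr₀, hW⟩ := exists_measure_setOf_forall_Ioo_ne_zero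
    (measure_inter_setOf_rnDeriv_lt_ne_zero hμ hS hS' hF hbα)
    ((ae_eventually_measure_closedBall_le hd μ).mono fun x hx hxS => hx α hxS.2)
  exact ⟨r₀, hr₀, _, fun x hx => hx.1.1, hW, fun x hx => hx.2⟩

theorem packing_number_lower_bound_general
    {d : ℕ} (hd : 1 ≤ d)
    (A B : Set (EuclideanSpace ℝ (Fin d))) (hAcompact : IsCompact A)
    (μ : Measure (EuclideanSpace ℝ (Fin d))) [IsProbabilityMeasure μ]
    (f : EuclideanSpace ℝ (Fin d) → ℝ) (hfnonneg : ∀ x, 0 ≤ f x)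
    (hdens : μ = volume.withDensity (fun x => ENNReal.ofReal (f x)))
    (hBA : B ⊆ A) (hBRiemann : volume (frontier B) = 0) (hμB : 0 < μ B)
    (f₀ : ℝ) (hf₀ : f₀ = essInf f (volume.restrict B))
    (α : ℝ) (hα : f₀ < α) :
    ∃ c > (0 : ℝ), ∃ r₀ > (0 : ℝ), ∀ r : ℝ, 0 < r → r < r₀ →
      c * r ^ (-(d : ℝ)) ≤ (packNum μ B r (α * ballVol d * r ^ d) : ℝ) := by
  have hB : TotallyBounded B := hAcompact.totallyBounded.subset hBA
  have hvolB : volume B ≠ 0 := fun h => hμB.ne' (hdens ▸ withDensity_absolutelyContinuous _ _ h)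
  obtain ⟨β, hf₀β, hβα⟩ := exists_between hα
  set S := {x | f x < β} ∩ B
  have hS : volume S ≠ 0 := by
    rw [← Measure.restrict_apply₀' (nullMeasurableSet_of_null_frontier hBRiemann)]
    exact measure_setOf_lt_ne_zero_of_essInf_lt (by simpa using hvolB) (hf₀ ▸ hf₀β)
  have hS' : volume S ≠ ∞ :=
    ((measure_mono (inter_subset_right.trans hBA)).trans_lt hAcompact.measure_lt_top).ne
  obtain ⟨x, hxS⟩ := nonempty_of_measure_ne_zero hS
  have hβα' : ENNReal.ofReal β < ENNReal.ofReal α :=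
    (ENNReal.ofReal_lt_ofReal_iff ((hfnonneg x).trans_lt (hxS.1.trans hβα))).2 hβα
  obtain ⟨r₀, hr₀, W, hWS, hW, hWr⟩ := exists_measure_ne_zero_forall_measure_closedBall_le hd
    hdens hS hS' (fun x hx => ENNReal.ofReal_le_ofReal hx.1.le) hβα'
  have hW' : volume W ≠ ∞ := ne_top_of_le_ne_top hS' (measure_mono hWS)
  refine ⟨(volume W).toReal / (ballVol d * 2 ^ d),
    div_pos (ENNReal.toReal_pos hW hW') (by positivity [ballVol_pos d]), r₀, hr₀,
    fun r hr hrr₀ => ?_⟩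
  exact toReal_volume_div_mul_rpow_le_packNum hd hB (hWS.trans inter_subset_right) hr
    fun x hx => hWr x hx r ⟨hr, hrr₀⟩

theorem packing_number_lower_bound
    {d : ℕ} (hd : 1 ≤ d)
    (A B : Set (EuclideanSpace ℝ (Fin d))) (hAcompact : IsCompact A)
    (μ : Measure (EuclideanSpace ℝ (Fin d))) [IsProbabilityMeasure μ] (hμA : μ A = 1)
    (f : EuclideanSpace ℝ (Fin d) → ℝ) (hfnonneg : ∀ x, 0 ≤ f x)
    (hdens : μ = volume.withDensity (fun x => ENNReal.ofReal (f x)))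
    (hBA : B ⊆ A) (hBRiemann : volume (frontier B) = 0) (hμB : 0 < μ B)
    (f₀ : ℝ) (hf₀ : f₀ = essInf f (volume.restrict B))
    (α : ℝ) (hα : f₀ < α) :
    ∃ c > (0 : ℝ), ∃ r₀ > (0 : ℝ), ∀ r : ℝ, 0 < r → r < r₀ →
      c * r ^ (-(d : ℝ)) ≤ (packNum μ B r (α * ballVol d * r ^ d) : ℝ) :=
  packing_number_lower_bound_general hd A B hAcompact μ f hfnonneg hdens hBA hBRiemann hμB f₀ hf₀ α
    hα
end
end

section
/- Let d ≥ 1 and let A ⊂ ℝ^d be a nonempty compact set with nonempty topological boundary. Let χ ⊂ ℝ^d be a finite set of points and let k ∈ ℕ. Define R := inf{ r > 0 : every x ∈ A has at least k points of χ in the closed ball B(x,r) }, R̃ := inf{ r > 0 : every x ∈ A^{(r)} has at least k points of χ in B(x,r) }, and R₁ := inf{ r > 0 : every x ∈ A \ A^{(r)} has at least k points of χ in B(x,r) }, in each case with inf ∅ := +∞, where A^{(r)} := { x ∈ A : B(x,r) ⊆ interior(A) }. Then R = max(R̃, R₁). -/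
/-!
The inequality `max R̃ R₁ ≤ R` is immediate, since both conditions are weaker than the
condition on all of `A`. Conversely, if `r̃` and `r₁` satisfy the interior and the boundary
condition, then `r := max r̃ r₁` satisfies the condition on `A`: the only points not
covered by monotonicity in the radius are those `x` with `B(x, r₁) ⊆ int A` but
`B(x, r) ⊄ int A`. For such `x`, let `p` be a nearest point of `(int A)ᶜ` and `z` the
point of the segment `[x, p]` at distance `r₁` from `p`. Then `z ∈ A \ A^{(r₁)}` and
`B(z, r₁) ⊆ B(x, r)`, so the `k` points of `χ` in `B(z, r₁)` also lie in `B(x, r)`.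
-/

open MeasureTheory Metric Filter Topology

noncomputable section

/-- The infimum (in `[-∞,∞]`, so `+∞` for the empty set) of the set of positive radii
satisfying a given property. -/
def radiusInf (Q : ℝ → Prop) : EReal :=
  sInf {ρ : EReal | ∃ r : ℝ, ρ = (r : EReal) ∧ 0 < r ∧ Q r}

/-- The `r`-interior `A^{(r)}` of `A`. -/
def rInterior {d : ℕ} (A : Set (EuclideanSpace ℝ (Fin d))) (r : ℝ) :
    Set (EuclideanSpace ℝ (Fin d)) :=
  {x ∈ A | closedBall x r ⊆ interior A}

section Geometry

variable {E : Type*} [NormedAddCommGroup E] [NormedSpace ℝ E] [ProperSpace E]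

theorem exists_mem_not_closedBall_subset_closedBall_subset {U : Set E} (hU : IsOpen U)
    {x y : E} {ρ r : ℝ} (hρ : 0 < ρ) (hx : closedBall x ρ ⊆ U) (hy : y ∉ U)
    (hxy : dist x y ≤ r) :
    ∃ z ∈ U, ¬ closedBall z ρ ⊆ U ∧ closedBall z ρ ⊆ closedBall x r := by
  obtain ⟨p, hpU, hp⟩ := hU.isClosed_compl.exists_infDist_eq_dist ⟨y, hy⟩ x
  have hρp : ρ < dist x p := by
    by_contra! h
    exact hpU (hx (mem_closedBall_comm.1 h))
  have hpr : dist x p ≤ r := hp ▸ (infDist_le_dist_of_mem hy).trans hxy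
  obtain ⟨z, hxz, hzp⟩ :=
    exists_dist_le_le (sub_nonneg.2 hρp.le) hρ.le (add_sub_cancel ρ (dist x p)).ge
  refine ⟨z, ball_infDist_compl_subset (x := x) ?_,
    fun h => hpU (h (mem_closedBall'.2 hzp)), ?_⟩
  · rw [hp, mem_ball']
    linarith
  · exact closedBall_subset_closedBall' (by rw [dist_comm]; linarith)

end Geometry

section RInterior

variable {d : ℕ} {A : Set (EuclideanSpace ℝ (Fin d))}

theorem rInterior_anti {r s : ℝ} (h : r ≤ s) : rInterior A s ⊆ rInterior A r :=
  fun _ hx => ⟨hx.1, (closedBall_subset_closedBall h).trans hx.2⟩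

theorem exists_mem_diff_rInterior_closedBall_subset {x : EuclideanSpace ℝ (Fin d)} {ρ r : ℝ}
    (hρ : 0 < ρ) (hxρ : x ∈ rInterior A ρ) (hxr : x ∉ rInterior A r) :
    ∃ z ∈ A \ rInterior A ρ, closedBall z ρ ⊆ closedBall x r := by
  obtain ⟨y, hyx, hyA⟩ := Set.not_subset.1 fun h => hxr ⟨hxρ.1, h⟩
  obtain ⟨z, hzA, hzρ, hzx⟩ := exists_mem_not_closedBall_subset_closedBall_subset
    isOpen_interior hρ hxρ.2 hyA (mem_closedBall'.1 hyx)
  exact ⟨z, ⟨interior_subset hzA, fun h => hzρ h.2⟩, hzx⟩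

variable {P : EuclideanSpace ℝ (Fin d) → ℝ → Prop}
  (hP : ∀ x y r s, closedBall x r ⊆ closedBall y s → P x r → P y s)
include hP

theorem forall_rInterior_mono {r s : ℝ} (h : r ≤ s) (hr : ∀ x ∈ rInterior A r, P x r) :
    ∀ x ∈ rInterior A s, P x s :=
  fun x hx => hP x x r s (closedBall_subset_closedBall h) (hr x (rInterior_anti h hx))

theorem forall_diff_rInterior_mono {r s : ℝ} (hr0 : 0 < r) (h : r ≤ s)
    (hr : ∀ x ∈ A \ rInterior A r, P x r) : ∀ x ∈ A \ rInterior A s, P x s := by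
  intro x ⟨hxA, hxs⟩
  by_cases hxr : x ∈ rInterior A r
  · obtain ⟨z, hz, hzx⟩ :=
      exists_mem_diff_rInterior_closedBall_subset hr0 hxr hxs
    exact hP z x r s hzx (hr z hz)
  · exact hP x x r s (closedBall_subset_closedBall h) (hr x ⟨hxA, hxr⟩)

theorem forall_of_forall_rInterior_of_forall_diff {r₁ r₂ : ℝ} (hr₂ : 0 < r₂)
    (h₁ : ∀ x ∈ rInterior A r₁, P x r₁) (h₂ : ∀ x ∈ A \ rInterior A r₂, P x r₂) :
    ∀ x ∈ A, P x (max r₁ r₂) := by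
  intro x hxA
  by_cases hx : x ∈ rInterior A (max r₁ r₂)
  · exact forall_rInterior_mono hP (le_max_left r₁ r₂) h₁ x hx
  · exact forall_diff_rInterior_mono hP hr₂ (le_max_right r₁ r₂) h₂ x ⟨hxA, hx⟩

end RInterior

theorem radiusInf_le_radiusInf {Q Q' : ℝ → Prop} (h : ∀ r, Q r → Q' r) :
    radiusInf Q' ≤ radiusInf Q :=
  sInf_le_sInf fun _ ⟨r, hρ, hr0, hr⟩ => ⟨r, hρ, hr0, h r hr⟩

theorem radiusInf_le_max {Q Q₁ Q₂ : ℝ → Prop}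
    (h : ∀ r₁ r₂, 0 < r₁ → 0 < r₂ → Q₁ r₁ → Q₂ r₂ → Q (max r₁ r₂)) :
    radiusInf Q ≤ max (radiusInf Q₁) (radiusInf Q₂) := by
  rw [radiusInf, radiusInf, radiusInf, sInf_sup_sInf]
  refine le_iInf₂ fun _ ⟨⟨r₁, h₁, hr₁, hQ₁⟩, ⟨r₂, h₂, hr₂, hQ₂⟩⟩ =>
    sInf_le ?_
  rw [h₁, h₂]
  change max (r₁ : EReal) r₂ ∈ _
  rw [← EReal.coe_strictMono.monotone.map_max]
  exact ⟨_, rfl, lt_max_of_lt_left hr₁, h r₁ r₂ hr₁ hr₂ hQ₁ hQ₂⟩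

theorem radiusInf_forall_eq_max {d : ℕ} (A : Set (EuclideanSpace ℝ (Fin d)))
    {P : EuclideanSpace ℝ (Fin d) → ℝ → Prop}
    (hP : ∀ x y r s, closedBall x r ⊆ closedBall y s → P x r → P y s) :
    radiusInf (fun r => ∀ x ∈ A, P x r) =
      max (radiusInf fun r => ∀ x ∈ rInterior A r, P x r)
        (radiusInf fun r => ∀ x ∈ A \ rInterior A r, P x r) :=
  le_antisymm
    (radiusInf_le_max fun _ _ _ hr₂ h₁ h₂ =>
      forall_of_forall_rInterior_of_forall_diff hP hr₂ h₁ h₂)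
    (max_le (radiusInf_le_radiusInf fun _ h x hx => h x hx.1)
      (radiusInf_le_radiusInf fun _ h x hx => h x hx.1))

theorem coverage_threshold_eq_max_interior_boundary_general
    {d : ℕ}
    (A : Set (EuclideanSpace ℝ (Fin d)))
    (χ : Finset (EuclideanSpace ℝ (Fin d))) (k : ℕ) :
    radiusInf (fun r => ∀ x ∈ A,
        k ≤ ((χ : Set (EuclideanSpace ℝ (Fin d))) ∩ closedBall x r).ncard) =
      max
        (radiusInf (fun r => ∀ x ∈ rInterior A r,
          k ≤ ((χ : Set (EuclideanSpace ℝ (Fin d))) ∩ closedBall x r).ncard))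
        (radiusInf (fun r => ∀ x ∈ A \ rInterior A r,
          k ≤ ((χ : Set (EuclideanSpace ℝ (Fin d))) ∩ closedBall x r).ncard)) :=
  radiusInf_forall_eq_max A fun _ _ _ _ hball hk =>
    hk.trans (Set.ncard_le_ncard (Set.inter_subset_inter_right _ hball)
      (χ.finite_toSet.inter_of_left _))

theorem coverage_threshold_eq_max_interior_boundary
    {d : ℕ} (hd : 1 ≤ d)
    (A : Set (EuclideanSpace ℝ (Fin d)))
    (hAne : A.Nonempty) (hAcompact : IsCompact A) (hfr : (frontier A).Nonempty)
    (χ : Finset (EuclideanSpace ℝ (Fin d))) (k : ℕ) (hk : 1 ≤ k) :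
    radiusInf (fun r => ∀ x ∈ A,
        k ≤ ((χ : Set (EuclideanSpace ℝ (Fin d))) ∩ closedBall x r).ncard) =
      max
        (radiusInf (fun r => ∀ x ∈ rInterior A r,
          k ≤ ((χ : Set (EuclideanSpace ℝ (Fin d))) ∩ closedBall x r).ncard))
        (radiusInf (fun r => ∀ x ∈ A \ rInterior A r,
          k ≤ ((χ : Set (EuclideanSpace ℝ (Fin d))) ∩ closedBall x r).ncard)) :=
  coverage_threshold_eq_max_interior_boundary_general A χ k
end
end

section
/- Let α ∈ (0,π) and u > 0, and let W_α := { (x, r·cos θ, r·sin θ) : x ∈ ℝ, r ≥ 0, θ ∈ [0,α] } ⊂ ℝ³ be the wedge of angle α. Then there exists a constant c' ∈ (0,∞), depending only on α and u, such that for every r > 0 and every point x = (x₁,x₂,x₃) ∈ W_α with ‖x‖ ≤ u·r, the Lebesgue measure of B(x,r) ∩ W_α is at least (2α/3)·r³ + c'·r²·x₃ + c'·r²·(x₂ − x₃·cot α), where B(x,r) is the closed Euclidean ball of radius r about x. -/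
open MeasureTheory Metric

noncomputable section

/-- The wedge `W_α := {(x, r cos θ, r sin θ) : x ∈ ℝ, r ≥ 0, θ ∈ [0, α]}` in `ℝ³`. -/
def wedge (α : ℝ) : Set (EuclideanSpace ℝ (Fin 3)) :=
  {p | ∃ r θ : ℝ, 0 ≤ r ∧ 0 ≤ θ ∧ θ ≤ α ∧
    p 1 = r * Real.cos θ ∧ p 2 = r * Real.sin θ}

/-!
The wedge `W` is a convex cone, so `B(x, r) ∩ W` contains `x + (B(0, r) ∩ W)`, whose volume
`2αr³/3` is computed by slicing perpendicular to the edge of `W` into planar sectors.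
`wedgeShear α` changes coordinates to `(p 0, ℓ p, p 2)` with `ℓ p = p 1 * sin α - p 2 * cos α`;
it has determinant `sin α` and maps `W` onto `ℝ × [0, ∞)²`. So, if `0 ≤ m₁ ≤ min (x 2) δ` and
`0 ≤ m₂ ≤ min (ℓ x) δ`, `W` also contains the translates by `x` of the boxes
`[0, δ) × [0, δ) × [-m₁, 0)` and `[0, δ) × [-m₂, 0) × [0, δ)` in these coordinates. They are
disjoint from `x + W` and from each other, lie in `B(x, r)` once `3δ ≤ r sin α`, and have volume
`δ² mᵢ / sin α`. Since `‖x‖ ≤ u r`, the two minima are at least fixed multiples of `x 2` and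
`ℓ x = sin α (x 1 - x 2 cot α)`.
-/

open Set Real
open scoped Pointwise

def planarWedge (α : ℝ) : Set (ℝ × ℝ) := {w | 0 ≤ w.2 ∧ 0 ≤ w.1 * sin α - w.2 * cos α}

theorem polarCoord_symm_mem_planarWedge_iff {α ρ θ : ℝ} (hα₀ : 0 < α) (hαπ : α < π)
    (hρ : 0 < ρ) (hθ : θ ∈ Ioc (-π) π) :
    polarCoord.symm (ρ, θ) ∈ planarWedge α ↔ θ ∈ Icc 0 α := by
  have hsub : ρ * cos θ * sin α - ρ * sin θ * cos α = ρ * sin (α - θ) := by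
    rw [sin_sub]
    ring
  simp only [polarCoord_symm_apply, planarWedge, mem_ofPred_eq, hsub,
    mul_nonneg_iff_of_pos_left hρ]
  constructor
  · rintro ⟨h₁, h₂⟩
    refine ⟨not_lt.1 fun h => (sin_neg_of_neg_of_neg_pi_lt h hθ.1).not_ge h₁, ?_⟩
    refine not_lt.1 fun h => (sin_neg_of_neg_of_neg_pi_lt (by linarith) ?_).not_ge h₂
    linarith [hθ.2]
  · rintro ⟨h₀, hα⟩
    exact ⟨sin_nonneg_of_nonneg_of_le_pi h₀ (by linarith),
      sin_nonneg_of_nonneg_of_le_pi (by linarith) (by linarith [hθ.1])⟩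

theorem mem_wedge_iff {α : ℝ} (hα₀ : 0 < α) (hαπ : α < π) {p : EuclideanSpace ℝ (Fin 3)} :
    p ∈ wedge α ↔ 0 ≤ p 2 ∧ 0 ≤ p 1 * sin α - p 2 * cos α := by
  change _ ↔ (p 1, p 2) ∈ planarWedge α
  constructor
  · rintro ⟨ρ, θ, hρ, hθ₀, hθα, h₁, h₂⟩
    rcases hρ.eq_or_lt with rfl | hρ
    · simp [planarWedge, h₁, h₂]
    have hθ : θ ∈ Ioc (-π) π := ⟨by linarith [pi_pos], by linarith⟩
    simpa [h₁, h₂] using (polarCoord_symm_mem_planarWedge_iff hα₀ hαπ hρ hθ).2 ⟨hθ₀, hθα⟩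
  · intro hp
    set z : ℂ := ⟨p 1, p 2⟩
    have hz : polarCoord.symm (‖z‖, z.arg) = (p 1, p 2) := by
      simp [Complex.norm_mul_cos_arg, Complex.norm_mul_sin_arg, z]
    have harg : z.arg ∈ Icc 0 α := by
      rcases (norm_nonneg z).eq_or_lt with h | h
      · rw [norm_eq_zero.1 h.symm, Complex.arg_zero]
        exact ⟨le_rfl, hα₀.le⟩
      · rw [← polarCoord_symm_mem_planarWedge_iff hα₀ hαπ h
          ⟨Complex.neg_pi_lt_arg z, Complex.arg_le_pi z⟩, hz]
        exact hp
    refine ⟨‖z‖, z.arg, norm_nonneg z, harg.1, harg.2, ?_, ?_⟩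
    · simp [Complex.norm_mul_cos_arg, z]
    · simp [Complex.norm_mul_sin_arg, z]

theorem add_mem_wedge {α : ℝ} (hα₀ : 0 < α) (hαπ : α < π) {p q : EuclideanSpace ℝ (Fin 3)}
    (hp : p ∈ wedge α) (hq : q ∈ wedge α) : p + q ∈ wedge α := by
  rw [mem_wedge_iff hα₀ hαπ] at hp hq ⊢
  simp only [PiLp.add_apply]
  constructor <;> linarith [hp.1, hp.2, hq.1, hq.2]

theorem lintegral_Ioc_ofReal_id {a : ℝ} (ha : 0 ≤ a) :
    ∫⁻ x in Ioc 0 a, ENNReal.ofReal x = ENNReal.ofReal (a ^ 2 / 2) := by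
  rw [← ofReal_integral_eq_lintegral_ofReal, ← intervalIntegral.integral_of_le ha, integral_id]
  · ring_nf
  · exact continuous_id.integrableOn_Icc.mono_set Ioc_subset_Icc_self
  · exact (ae_restrict_iff' measurableSet_Ioc).2 (.of_forall fun x hx => hx.1.le)

theorem lintegral_ofReal_sq_sub_sq {r : ℝ} (hr : 0 ≤ r) :
    ∫⁻ t, ENNReal.ofReal (r ^ 2 - t ^ 2) = ENNReal.ofReal (4 * r ^ 3 / 3) := by
  have hsupp : (fun t => ENNReal.ofReal (r ^ 2 - t ^ 2)).support ⊆ Icc (-r) r := by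
    intro t ht
    rw [Function.mem_support, ne_eq, ENNReal.ofReal_eq_zero, not_le] at ht
    exact ⟨by nlinarith, by nlinarith⟩
  rw [← setLIntegral_eq_of_support_subset hsupp, ← ofReal_integral_eq_lintegral_ofReal,
    integral_Icc_eq_integral_Ioc, ← intervalIntegral.integral_of_le (by linarith),
    intervalIntegral.integral_sub intervalIntegrable_const
      (intervalIntegral.intervalIntegrable_pow 2), integral_pow]
  · simp only [intervalIntegral.integral_const, sub_neg_eq_add, smul_eq_mul]
    ring_nf
  · exact (by fun_prop : Continuous fun t : ℝ => r ^ 2 - t ^ 2).integrableOn_Icc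
  · refine (ae_restrict_iff' measurableSet_Icc).2 (.of_forall fun t ht => ?_)
    show 0 ≤ r ^ 2 - t ^ 2
    nlinarith [ht.1, ht.2]

theorem volume_planarWedge_inter_disc {α : ℝ} (hα₀ : 0 < α) (hαπ : α < π) (b : ℝ) :
    volume (planarWedge α ∩ {w : ℝ × ℝ | w.1 ^ 2 + w.2 ^ 2 ≤ b}) =
      ENNReal.ofReal (α / 2 * b) := by
  set S := planarWedge α ∩ {w : ℝ × ℝ | w.1 ^ 2 + w.2 ^ 2 ≤ b}
  set R := Ioc 0 √b ×ˢ Icc 0 α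
  have hS : MeasurableSet S := by
    simp only [S, planarWedge]
    measurability
  have hR : R ⊆ polarCoord.target := prod_mono (fun ρ hρ => hρ.1)
    fun θ hθ => ⟨by linarith [hθ.1, pi_pos], by linarith [hθ.2]⟩
  have hpolar : EqOn (fun p => ENNReal.ofReal p.1 • S.indicator 1 (polarCoord.symm p))
      (R.indicator fun p => ENNReal.ofReal p.1) polarCoord.target := by
    rintro ⟨ρ, θ⟩ ⟨hρ, hθ⟩
    have hρ : 0 < ρ := hρ
    have hmem : polarCoord.symm (ρ, θ) ∈ S ↔ (ρ, θ) ∈ R := by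
      have hdisc : (ρ * cos θ) ^ 2 + (ρ * sin θ) ^ 2 = ρ ^ 2 := by
        linear_combination ρ ^ 2 * sin_sq_add_cos_sq θ
      rw [mem_inter_iff, polarCoord_symm_mem_planarWedge_iff hα₀ hαπ hρ ⟨hθ.1, hθ.2.le⟩,
        mem_prod]
      simp only [polarCoord_symm_apply, mem_ofPred_eq, hdisc, mem_Ioc, hρ, true_and]
      rw [le_sqrt' hρ, and_comm]
    dsimp only
    by_cases h : (ρ, θ) ∈ R
    · rw [indicator_of_mem h, indicator_of_mem (hmem.2 h)]
      simp
    · rw [indicator_of_notMem h, indicator_of_notMem (mt hmem.1 h)]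
      simp
  calc volume S = ∫⁻ p, S.indicator 1 p := (lintegral_indicator_one hS).symm
    _ = ∫⁻ p in polarCoord.target, ENNReal.ofReal p.1 • S.indicator 1 (polarCoord.symm p) :=
      (lintegral_comp_polarCoord_symm _).symm
    _ = ∫⁻ p in R, ENNReal.ofReal p.1 := by
      rw [setLIntegral_congr_fun polarCoord.open_target.measurableSet hpolar,
        lintegral_indicator (measurableSet_Ioc.prod measurableSet_Icc),
        Measure.restrict_restrict (measurableSet_Ioc.prod measurableSet_Icc),
        inter_eq_self_of_subset_left hR]
    _ = (∫⁻ ρ in Ioc 0 √b, ENNReal.ofReal ρ) * ∫⁻ _ in Icc 0 α, 1 := by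
      rw [Measure.volume_eq_prod, ← Measure.prod_restrict,
        ← lintegral_prod_mul (by fun_prop) aemeasurable_const]
      simp
    _ = ENNReal.ofReal (α / 2 * b) := by
      rcases lt_or_ge b 0 with hb | hb
      · simp [sqrt_eq_zero'.2 hb.le, ENNReal.ofReal_of_nonpos (by nlinarith : α / 2 * b ≤ 0)]
      · rw [lintegral_Ioc_ofReal_id (sqrt_nonneg b), sq_sqrt hb, setLIntegral_const, one_mul,
          Real.volume_Icc, ← ENNReal.ofReal_mul (by positivity)]
        ring_nf

theorem measurePreserving_euclideanSpace_fin_three :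
    MeasurePreserving (fun p : EuclideanSpace ℝ (Fin 3) => (p 0, p 1, p 2)) :=
  (((MeasurePreserving.id volume).prod (volume_preserving_finTwoArrow ℝ)).comp
    (volume_preserving_piFinSuccAbove (fun _ : Fin 3 => ℝ) 0)).comp (PiLp.volume_preserving_ofLp _)

theorem volume_closedBall_zero_inter_wedge {α r : ℝ} (hα₀ : 0 < α) (hαπ : α < π) (hr : 0 ≤ r) :
    volume (closedBall 0 r ∩ wedge α) = ENNReal.ofReal (2 * α / 3 * r ^ 3) := by
  set T : Set (ℝ × ℝ × ℝ) :=
    {z | z.2 ∈ planarWedge α ∩ {w : ℝ × ℝ | w.1 ^ 2 + w.2 ^ 2 ≤ r ^ 2 - z.1 ^ 2}}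
  have hT : MeasurableSet T := by
    simp only [T, planarWedge]
    measurability
  have hball : closedBall 0 r ∩ wedge α =
      (fun p : EuclideanSpace ℝ (Fin 3) => (p 0, p 1, p 2)) ⁻¹' T := by
    ext p
    rw [mem_inter_iff, mem_wedge_iff hα₀ hαπ, mem_closedBall_zero_iff,
      ← sq_le_sq₀ (norm_nonneg p) hr, EuclideanSpace.real_norm_sq_eq, Fin.sum_univ_three]
    simp only [T, planarWedge, mem_preimage, mem_inter_iff, mem_ofPred_eq]
    exact ⟨fun ⟨h₁, h₂⟩ => ⟨h₂, by linarith⟩, fun ⟨h₁, h₂⟩ => ⟨by linarith, h₁⟩⟩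
  rw [hball, measurePreserving_euclideanSpace_fin_three.measure_preimage hT.nullMeasurableSet,
    Measure.volume_eq_prod, Measure.prod_apply hT]
  simp only [T, preimage_ofPred_eq, ofPred_mem_eq, volume_planarWedge_inter_disc hα₀ hαπ,
    ENNReal.ofReal_mul (by positivity : 0 ≤ α / 2)]
  rw [lintegral_const_mul _ (by fun_prop), lintegral_ofReal_sq_sub_sq hr,
    ← ENNReal.ofReal_mul (by positivity)]
  ring_nf

theorem measurableSet_linearMap_box {ι : Type*} [Fintype ι]
    (f : EuclideanSpace ℝ ι →ₗ[ℝ] EuclideanSpace ℝ ι) (a b : ι → ℝ) :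
    MeasurableSet {q | ∀ i, f q i ∈ Ico (a i) (b i)} := by
  measurability

theorem volume_linearMap_box {ι : Type*} [Fintype ι]
    {f : EuclideanSpace ℝ ι →ₗ[ℝ] EuclideanSpace ℝ ι} (hf : LinearMap.det f ≠ 0)
    {a b : ι → ℝ} (hab : a ≤ b) :
    volume {q | ∀ i, f q i ∈ Ico (a i) (b i)} =
      ENNReal.ofReal (|(LinearMap.det f)⁻¹| * ∏ i, (b i - a i)) := by
  have hbox : {q | ∀ i, f q i ∈ Ico (a i) (b i)} =
      f ⁻¹' (WithLp.ofLp ⁻¹' univ.pi fun i => Ico (a i) (b i)) := by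
    ext q
    simp
  rw [hbox, Measure.addHaar_preimage_linearMap _ hf,
    (PiLp.volume_preserving_ofLp ι).measure_preimage
      (MeasurableSet.univ_pi fun i => measurableSet_Ico).nullMeasurableSet,
    Real.volume_pi_Ico, ENNReal.ofReal_mul (abs_nonneg _),
    ENNReal.ofReal_prod_of_nonneg fun i _ => sub_nonneg.2 (hab i)]

def wedgeShear (α : ℝ) : EuclideanSpace ℝ (Fin 3) →ₗ[ℝ] EuclideanSpace ℝ (Fin 3) :=
  Matrix.toEuclideanLin !![1, 0, 0; 0, sin α, -cos α; 0, 0, 1]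

@[simp]
theorem wedgeShear_apply_zero (α : ℝ) (q : EuclideanSpace ℝ (Fin 3)) :
    wedgeShear α q 0 = q 0 := by
  simp [wedgeShear, Matrix.mulVec, dotProduct, Fin.sum_univ_three]

@[simp]
theorem wedgeShear_apply_one (α : ℝ) (q : EuclideanSpace ℝ (Fin 3)) :
    wedgeShear α q 1 = q 1 * sin α - q 2 * cos α := by
  simp [wedgeShear, Matrix.mulVec, dotProduct, Fin.sum_univ_three]
  ring

@[simp]
theorem wedgeShear_apply_two (α : ℝ) (q : EuclideanSpace ℝ (Fin 3)) :
    wedgeShear α q 2 = q 2 := by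
  simp [wedgeShear, Matrix.mulVec, dotProduct, Fin.sum_univ_three]

theorem det_wedgeShear (α : ℝ) : LinearMap.det (wedgeShear α) = sin α := by
  rw [wedgeShear, Matrix.toEuclideanLin_eq_toLin_orthonormal, LinearMap.det_toLin,
    Matrix.det_fin_three]
  simp

def wedgeBox (α : ℝ) (a b : Fin 3 → ℝ) : Set (EuclideanSpace ℝ (Fin 3)) :=
  {q | ∀ i, wedgeShear α q i ∈ Ico (a i) (b i)}

theorem volume_wedgeBox {α : ℝ} (hs : 0 < sin α) {a b : Fin 3 → ℝ} (hab : a ≤ b) :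
    volume (wedgeBox α a b) = ENNReal.ofReal ((∏ i, (b i - a i)) / sin α) := by
  rw [wedgeBox, volume_linearMap_box (by rw [det_wedgeShear]; exact hs.ne') hab, det_wedgeShear,
    abs_inv, abs_of_pos hs, inv_mul_eq_div]

theorem norm_mul_sin_le_of_mem_wedgeBox {α δ : ℝ} {a b : Fin 3 → ℝ}
    (ha : ∀ i, -δ ≤ a i) (hb : ∀ i, b i ≤ δ) {q : EuclideanSpace ℝ (Fin 3)}
    (hq : q ∈ wedgeBox α a b) : ‖q‖ * sin α ≤ 3 * δ := by
  have hq : ∀ i, |wedgeShear α q i| ≤ δ := fun i =>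
    abs_le.2 ⟨(ha i).trans (hq i).1, (hq i).2.le.trans (hb i)⟩
  have hδ : 0 ≤ δ := (abs_nonneg _).trans (hq 0)
  have h₀ := abs_le.1 (hq 0)
  have h₁ := abs_le.1 (hq 1)
  have h₂ := abs_le.1 (hq 2)
  simp only [wedgeShear_apply_zero, wedgeShear_apply_one, wedgeShear_apply_two] at h₀ h₁ h₂
  have hq₂c : |q 2 * cos α| ≤ δ := by
    rw [abs_mul]
    exact (mul_le_of_le_one_right (abs_nonneg _) (abs_cos_le_one α)).trans (abs_le.2 h₂)
  have hq₁ : (q 1 * sin α) ^ 2 ≤ (2 * δ) ^ 2 := by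
    nlinarith [abs_le.1 hq₂c]
  have hnorm : (‖q‖ * sin α) ^ 2 ≤ (3 * δ) ^ 2 := by
    rw [mul_pow, EuclideanSpace.real_norm_sq_eq, Fin.sum_univ_three]
    nlinarith [sin_sq_le_one α, sq_nonneg (q 0), sq_nonneg (q 2)]
  exact (abs_le_of_sq_le_sq' hnorm (by positivity)).2

theorem vadd_wedgeBox_subset_closedBall_inter_wedge {α r δ : ℝ} (hα₀ : 0 < α) (hαπ : α < π)
    (hδr : 3 * δ ≤ r * sin α) {x : EuclideanSpace ℝ (Fin 3)} {a b : Fin 3 → ℝ}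
    (ha : ∀ i, -δ ≤ a i) (hb : ∀ i, b i ≤ δ)
    (ha₁ : -(x 1 * sin α - x 2 * cos α) ≤ a 1) (ha₂ : -x 2 ≤ a 2) :
    x +ᵥ wedgeBox α a b ⊆ closedBall x r ∩ wedge α := by
  rintro _ ⟨q, hq, rfl⟩
  change x + q ∈ _
  refine ⟨?_, ?_⟩
  · rw [mem_closedBall, dist_eq_norm, add_sub_cancel_left]
    exact le_of_mul_le_mul_right ((norm_mul_sin_le_of_mem_wedgeBox ha hb hq).trans hδr)
      (sin_pos_of_pos_of_lt_pi hα₀ hαπ)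
  · have h₁ := (hq 1).1
    have h₂ := (hq 2).1
    simp only [wedgeShear_apply_one, wedgeShear_apply_two] at h₁ h₂
    rw [mem_wedge_iff hα₀ hαπ]
    simp only [PiLp.add_apply]
    constructor <;> linarith

theorem disjoint_wedge_wedgeBox {α : ℝ} (hα₀ : 0 < α) (hαπ : α < π) {a b : Fin 3 → ℝ}
    (hb : b 1 ≤ 0 ∨ b 2 ≤ 0) : Disjoint (wedge α) (wedgeBox α a b) := by
  refine disjoint_left.2 fun q hq hq' => ?_
  rw [mem_wedge_iff hα₀ hαπ] at hq
  have h₁ := (hq' 1).2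
  have h₂ := (hq' 2).2
  simp only [wedgeShear_apply_one, wedgeShear_apply_two] at h₁ h₂
  rcases hb with hb | hb <;> linarith [hq.1, hq.2]

theorem disjoint_wedgeBox {α : ℝ} {a b a' b' : Fin 3 → ℝ} (i : Fin 3) (h : b i ≤ a' i) :
    Disjoint (wedgeBox α a b) (wedgeBox α a' b') :=
  disjoint_left.2 fun _ hq hq' => ((hq i).2.trans_le h).not_ge (hq' i).1

theorem ofReal_le_volume_closedBall_inter_wedge {α r δ m₁ m₂ : ℝ} (hα₀ : 0 < α) (hαπ : α < π)
    (hr : 0 ≤ r) (hδr : 3 * δ ≤ r * sin α) {x : EuclideanSpace ℝ (Fin 3)}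
    (hm₁ : 0 ≤ m₁) (hm₁δ : m₁ ≤ δ) (hm₁x : m₁ ≤ x 2)
    (hm₂ : 0 ≤ m₂) (hm₂δ : m₂ ≤ δ) (hm₂x : m₂ ≤ x 1 * sin α - x 2 * cos α) :
    ENNReal.ofReal (2 * α / 3 * r ^ 3 + δ ^ 2 / sin α * (m₁ + m₂)) ≤
      volume (closedBall x r ∩ wedge α) := by
  have hs : 0 < sin α := sin_pos_of_pos_of_lt_pi hα₀ hαπ
  have hδ : 0 ≤ δ := hm₁.trans hm₁δ
  have hx : x ∈ wedge α := (mem_wedge_iff hα₀ hαπ).2 ⟨by linarith, by linarith⟩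
  set K₀ := closedBall 0 r ∩ wedge α
  set K₁ := wedgeBox α ![0, 0, -m₁] ![δ, δ, 0]
  set K₂ := wedgeBox α ![0, -m₂, 0] ![δ, 0, δ]
  have hvol₁ : volume K₁ = ENNReal.ofReal (δ ^ 2 / sin α * m₁) := by
    rw [volume_wedgeBox hs (by simp [Pi.le_def, Fin.forall_fin_succ, hδ, hm₁])]
    simp only [Fin.prod_univ_three, Matrix.cons_val_zero, Matrix.cons_val_one, Matrix.cons_val,
      sub_zero, sub_neg_eq_add, zero_add]
    ring_nf
  have hvol₂ : volume K₂ = ENNReal.ofReal (δ ^ 2 / sin α * m₂) := by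
    rw [volume_wedgeBox hs (by simp [Pi.le_def, Fin.forall_fin_succ, hδ, hm₂])]
    simp only [Fin.prod_univ_three, Matrix.cons_val_zero, Matrix.cons_val_one, Matrix.cons_val,
      sub_zero, sub_neg_eq_add, zero_add]
    ring_nf
  have hsub : x +ᵥ (K₀ ∪ K₁ ∪ K₂) ⊆ closedBall x r ∩ wedge α := by
    rw [vadd_set_union, vadd_set_union]
    refine union_subset (union_subset ?_ ?_) ?_
    · rintro _ ⟨q, hq, rfl⟩
      change x + q ∈ _
      rw [mem_inter_iff, mem_closedBall, dist_eq_norm, add_sub_cancel_left]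
      exact ⟨mem_closedBall_zero_iff.1 hq.1, add_mem_wedge hα₀ hαπ hx hq.2⟩
    all_goals
      refine vadd_wedgeBox_subset_closedBall_inter_wedge hα₀ hαπ hδr ?_ ?_ ?_ ?_ <;>
        simp only [Fin.forall_fin_succ, Matrix.cons_val_zero, Matrix.cons_val_one,
          Matrix.cons_val, Matrix.cons_val_succ, Matrix.cons_val_fin_one, Left.neg_nonpos_iff,
          neg_le_neg_iff, hδ, hm₁δ, hm₂δ, le_rfl, implies_true, and_self] <;> linarith
  have hdisj₁ : Disjoint K₀ K₁ :=
    (disjoint_wedge_wedgeBox hα₀ hαπ (by simp)).mono_left inter_subset_right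
  have hdisj₂ : Disjoint (K₀ ∪ K₁) K₂ :=
    ((disjoint_wedge_wedgeBox hα₀ hαπ (by simp)).mono_left inter_subset_right).union_left
      (disjoint_wedgeBox 2 (by simp))
  calc _ = volume K₀ + volume K₁ + volume K₂ := by
        have h₀ : 0 ≤ 2 * α / 3 * r ^ 3 := by positivity
        rw [volume_closedBall_zero_inter_wedge hα₀ hαπ hr, hvol₁, hvol₂,
          ← ENNReal.ofReal_add h₀ (by positivity),
          ← ENNReal.ofReal_add (by positivity) (by positivity)]
        ring_nf
    _ = volume (x +ᵥ (K₀ ∪ K₁ ∪ K₂)) := by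
      rw [measure_vadd, measure_union hdisj₂ (measurableSet_linearMap_box _ _ _),
        measure_union hdisj₁ (measurableSet_linearMap_box _ _ _)]
    _ ≤ _ := measure_mono hsub

theorem mul_div_add_le_min {t A δ : ℝ} (hδ : 0 < δ) (ht : 0 ≤ t) (htA : t ≤ A) :
    δ * t / (A + δ) ≤ min t δ := by
  rw [div_le_iff₀ (by linarith)]
  rcases le_total t δ with h | h
  · rw [min_eq_left h]
    nlinarith
  · rw [min_eq_right h]
    nlinarith

theorem mul_sin_sub_mul_cos_le_two_mul_norm (α : ℝ) (x : EuclideanSpace ℝ (Fin 3)) :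
    x 1 * sin α - x 2 * cos α ≤ 2 * ‖x‖ :=
  calc x 1 * sin α - x 2 * cos α ≤ |x 1 * sin α| + |x 2 * cos α| := by
        linarith [le_abs_self (x 1 * sin α), neg_abs_le (x 2 * cos α)]
    _ ≤ |x 1| + |x 2| := by
        rw [abs_mul, abs_mul]
        gcongr
        · exact mul_le_of_le_one_right (abs_nonneg _) (abs_sin_le_one α)
        · exact mul_le_of_le_one_right (abs_nonneg _) (abs_cos_le_one α)
    _ ≤ 2 * ‖x‖ := by
        have h₁ : |x 1| ≤ ‖x‖ := PiLp.norm_apply_le x 1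
        have h₂ : |x 2| ≤ ‖x‖ := PiLp.norm_apply_le x 2
        linarith

theorem volume_closedBall_inter_wedge_ge {α u r : ℝ} (hα₀ : 0 < α) (hαπ : α < π) (hu : 0 < u)
    (hr : 0 < r) {x : EuclideanSpace ℝ (Fin 3)} (hx : x ∈ wedge α) (hxr : ‖x‖ ≤ u * r) :
    2 * α / 3 * r ^ 3 + sin α ^ 2 / (9 * (6 * u + sin α)) * r ^ 2 *
        (x 2 + (x 1 * sin α - x 2 * cos α)) ≤ (volume (closedBall x r ∩ wedge α)).toReal := by
  have hs : 0 < sin α := sin_pos_of_pos_of_lt_pi hα₀ hαπ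
  obtain ⟨hx₂, hxℓ⟩ := (mem_wedge_iff hα₀ hαπ).1 hx
  have hδ : 0 < sin α * r / 3 := by positivity
  have hmin : ∀ t, 0 ≤ t → t ≤ 2 * u * r →
      sin α * t / (6 * u + sin α) ≤ min t (sin α * r / 3) := fun t ht htA => by
    convert mul_div_add_le_min hδ ht htA using 1
    field_simp
    ring
  have hm₁ := le_min_iff.1 <| hmin _ hx₂ <| by
    linarith [(le_abs_self _).trans (PiLp.norm_apply_le x 2)]
  have hm₂ := le_min_iff.1 <| hmin _ hxℓ <| by
    linarith [mul_sin_sub_mul_cos_le_two_mul_norm α x]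
  refine (ENNReal.ofReal_le_iff_le_toReal (measure_ne_top_of_subset inter_subset_left
    measure_closedBall_lt_top.ne)).1 (le_of_eq_of_le ?_
      (ofReal_le_volume_closedBall_inter_wedge hα₀ hαπ hr.le (by linarith) (by positivity)
        hm₁.2 hm₁.1 (by positivity) hm₂.2 hm₂.1))
  congr 1
  field_simp
  ring

theorem wedge_ball_volume_lower_bound
    (α u : ℝ) (hα₀ : 0 < α) (hαπ : α < Real.pi) (hu : 0 < u) :
    ∃ c' : ℝ, 0 < c' ∧ ∀ r : ℝ, 0 < r → ∀ x ∈ wedge α, ‖x‖ ≤ u * r →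
      (2 * α / 3) * r ^ 3 + c' * r ^ 2 * (x 2) +
          c' * r ^ 2 * (x 1 - x 2 * (Real.cos α / Real.sin α)) ≤
        (volume (closedBall x r ∩ wedge α)).toReal := by
  have hs : 0 < sin α := sin_pos_of_pos_of_lt_pi hα₀ hαπ
  refine ⟨sin α ^ 3 / (9 * (6 * u + sin α)), by positivity, fun r hr x hx hxr => ?_⟩
  have hx₂ := ((mem_wedge_iff hα₀ hαπ).1 hx).1
  have hface₁ : sin α ^ 3 / (9 * (6 * u + sin α)) * r ^ 2 * x 2 ≤
      sin α ^ 2 / (9 * (6 * u + sin α)) * r ^ 2 * x 2 := by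
    have := pow_le_pow_of_le_one hs.le (sin_le_one α) (by norm_num : 2 ≤ 3)
    gcongr
  have hface₂ : sin α ^ 3 / (9 * (6 * u + sin α)) * r ^ 2 * (x 1 - x 2 * (cos α / sin α)) =
      sin α ^ 2 / (9 * (6 * u + sin α)) * r ^ 2 * (x 1 * sin α - x 2 * cos α) := by
    field_simp
  linarith [volume_closedBall_inter_wedge_ge hα₀ hαπ hu hr hx hxr]
end
end

section
/- Let m ≥ 1, let U ⊆ ℝ^m be open, and let φ : U → ℝ be twice continuously differentiable with all second partial derivatives bounded in absolute value by M on U. Let T ⊆ U be an m-dimensional simplex with vertices u_0, u_1, …, u_m (i.e. T is the convex hull of m+1 affinely independent points of U), and let ψ : ℝ^m → ℝ be the (unique) affine function with ψ(u_i) = φ(u_i) for i = 0, 1, …, m. Then for every u ∈ T, |φ(u) − ψ(u)| ≤ (m+1)²·M·(diam T)², where diam T denotes the Euclidean diameter of T. -/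
open Metric

/-!
Let `L` be the derivative of `φ` at `v`. The map `χ x = ψ x - φ v - L (x - v)` is affine, equals
`ψ v - φ v` at `v`, and at each vertex `u i` equals the second-order Taylor remainder of `φ`
between `v` and `u i`. The absolute value of an affine map is convex, so on the simplex it is
bounded by its values at the vertices. Each remainder is at most `‖D²φ‖ (diam T)²`, and bounding
the entries of the Hessian by `M` bounds its operator norm by `m² M`.
-/

section Affine

variable {𝕜 E : Type*} [Field 𝕜] [LinearOrder 𝕜] [IsStrictOrderedRing 𝕜]
  [AddCommGroup E] [Module 𝕜 E]

theorem AffineMap.convexOn_abs (χ : E →ᵃ[𝕜] 𝕜) : ConvexOn 𝕜 Set.univ fun x => |χ x| := by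
  refine ⟨convex_univ, fun x _ y _ a b ha hb hab => ?_⟩
  calc |χ (a • x + b • y)| = |a * χ x + b * χ y| := by
        rw [Convex.combo_affine_apply hab, smul_eq_mul, smul_eq_mul]
    _ ≤ |a * χ x| + |b * χ y| := abs_add_le _ _
    _ = a • |χ x| + b • |χ y| := by
        rw [abs_mul, abs_mul, abs_of_nonneg ha, abs_of_nonneg hb, smul_eq_mul, smul_eq_mul]

theorem AffineMap.abs_le_of_mem_convexHull (χ : E →ᵃ[𝕜] 𝕜) {s : Set E} {v : E} {K : 𝕜}
    (hv : v ∈ convexHull 𝕜 s) (hs : ∀ x ∈ s, |χ x| ≤ K) : |χ v| ≤ K := by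
  obtain ⟨y, hy, hvy⟩ := χ.convexOn_abs.exists_ge_of_mem_convexHull (Set.subset_univ s) hv
  exact hvy.trans (hs y hy)

theorem AffineMap.abs_sub_le_of_mem_convexHull (ψ : E →ᵃ[𝕜] 𝕜) (L : E →ₗ[𝕜] 𝕜) (c : 𝕜)
    {s : Set E} {v : E} {K : 𝕜} (hv : v ∈ convexHull 𝕜 s)
    (hs : ∀ x ∈ s, |ψ x - c - L (x - v)| ≤ K) : |ψ v - c| ≤ K := by
  let χ := ψ - L.toAffineMap - AffineMap.const 𝕜 E (c - L v)
  have hχ : ∀ x, χ x = ψ x - c - L (x - v) := fun x => by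
    simp only [χ, AffineMap.coe_sub, Pi.sub_apply, LinearMap.coe_toAffineMap,
      AffineMap.const_apply, map_sub]
    ring
  simpa only [hχ, sub_self, map_zero, sub_zero] using χ.abs_le_of_mem_convexHull hv fun x hx =>
    (hχ x).symm ▸ hs x hx

end Affine

section OperatorNorm

variable {ι 𝕜 E F : Type*} [Fintype ι] [RCLike 𝕜] [NormedAddCommGroup E] [InnerProductSpace 𝕜 E]
  [NormedAddCommGroup F] [NormedSpace 𝕜 F]

theorem OrthonormalBasis.opNorm_le_card_mul (b : OrthonormalBasis ι 𝕜 E) (L : E →L[𝕜] F)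
    {K : ℝ} (hK : 0 ≤ K) (hL : ∀ i, ‖L (b i)‖ ≤ K) : ‖L‖ ≤ Fintype.card ι * K := by
  refine L.opNorm_le_bound (by positivity) fun x => ?_
  calc ‖L x‖ = ‖∑ i, inner 𝕜 (b i) x • L (b i)‖ := by
        conv_lhs => rw [← b.sum_repr' x]
        simp only [map_sum, map_smul]
    _ ≤ ∑ i, ‖inner 𝕜 (b i) x‖ * ‖L (b i)‖ := (norm_sum_le _ _).trans_eq (by simp only [norm_smul])
    _ ≤ ∑ _i : ι, ‖x‖ * K := by
        gcongr with i
        · exact (norm_inner_le_norm _ _).trans_eq (by rw [b.orthonormal.1 i, one_mul])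
        · exact hL i
    _ = Fintype.card ι * K * ‖x‖ := by
        rw [Finset.sum_const, Finset.card_univ, nsmul_eq_mul]
        ring

theorem OrthonormalBasis.opNorm_bilinear_le_card_mul_card_mul (b : OrthonormalBasis ι 𝕜 E)
    (B : E →L[𝕜] E →L[𝕜] F) {M : ℝ} (hM : 0 ≤ M) (hB : ∀ i j, ‖B (b i) (b j)‖ ≤ M) :
    ‖B‖ ≤ Fintype.card ι * (Fintype.card ι * M) :=
  b.opNorm_le_card_mul B (by positivity) fun i => b.opNorm_le_card_mul (B (b i)) hM (hB i)

end OperatorNorm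

theorem EuclideanSpace.norm_fderiv_fderiv_le_of_abs_iteratedFDerivWithin_le {ι : Type*}
    [Fintype ι] [DecidableEq ι] {U : Set (EuclideanSpace ℝ ι)} (hU : IsOpen U)
    {φ : EuclideanSpace ℝ ι → ℝ} {x : EuclideanSpace ℝ ι} (hx : x ∈ U) {M : ℝ} (hM0 : 0 ≤ M)
    (hM : ∀ i j : ι, |iteratedFDerivWithin ℝ 2 φ U x
      ![EuclideanSpace.single i (1 : ℝ), EuclideanSpace.single j (1 : ℝ)]| ≤ M) :
    ‖fderiv ℝ (fderiv ℝ φ) x‖ ≤ Fintype.card ι * (Fintype.card ι * M) :=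
  (EuclideanSpace.basisFun ι ℝ).opNorm_bilinear_le_card_mul_card_mul _ hM0 fun i j => by
    simpa [iteratedFDerivWithin_of_isOpen 2 hU hx, iteratedFDeriv_two_apply] using hM i j

theorem Convex.norm_image_sub_sub_fderiv_le {E G : Type*} [NormedAddCommGroup E]
    [NormedSpace ℝ E] [NormedAddCommGroup G] [NormedSpace ℝ G] {f : E → G} {s : Set E} {C : ℝ}
    {x y : E} (hs : Convex ℝ s) (hf : ∀ z ∈ s, DifferentiableAt ℝ f z)
    (hf' : ∀ z ∈ s, DifferentiableAt ℝ (fderiv ℝ f) z)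
    (hC : ∀ z ∈ s, ‖fderiv ℝ (fderiv ℝ f) z‖ ≤ C) (hx : x ∈ s) (hy : y ∈ s) :
    ‖f y - f x - fderiv ℝ f x (y - x)‖ ≤ C * ‖y - x‖ ^ 2 := by
  have hseg : segment ℝ x y ⊆ s := hs.segment_subset hx hy
  have hC0 : 0 ≤ C := (norm_nonneg (fderiv ℝ (fderiv ℝ f) x)).trans (hC x hx)
  have hlip : ∀ z ∈ segment ℝ x y, ‖fderiv ℝ f z - fderiv ℝ f x‖ ≤ C * ‖y - x‖ := fun z hz =>
    (hs.norm_image_sub_le_of_norm_fderiv_le hf' hC hx (hseg hz)).trans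
      (mul_le_mul_of_nonneg_left (norm_sub_le_of_mem_segment hz) hC0)
  calc ‖f y - f x - fderiv ℝ f x (y - x)‖ ≤ C * ‖y - x‖ * ‖y - x‖ :=
        (convex_segment x y).norm_image_sub_le_of_norm_fderiv_le' (fun z hz => hf z (hseg hz))
          hlip (left_mem_segment ℝ x y) (right_mem_segment ℝ x y)
    _ = C * ‖y - x‖ ^ 2 := by ring

theorem affine_interpolation_error_on_simplex_general
    {m : ℕ} (hm : 1 ≤ m)
    (U : Set (EuclideanSpace ℝ (Fin m))) (hU : IsOpen U)
    (φ : EuclideanSpace ℝ (Fin m) → ℝ) (M : ℝ)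
    (hφ : ContDiffOn ℝ 2 φ U)
    (hM : ∀ x ∈ U, ∀ i j : Fin m,
      |iteratedFDerivWithin ℝ 2 φ U x
          ![EuclideanSpace.single i (1 : ℝ), EuclideanSpace.single j (1 : ℝ)]| ≤ M)
    (u : Fin (m + 1) → EuclideanSpace ℝ (Fin m))
    (hTU : convexHull ℝ (Set.range u) ⊆ U)
    (ψ : EuclideanSpace ℝ (Fin m) →ᵃ[ℝ] ℝ)
    (hψ : ∀ i : Fin (m + 1), ψ (u i) = φ (u i)) :
    ∀ v ∈ convexHull ℝ (Set.range u),
      |φ v - ψ v| ≤ ((m : ℝ) + 1) ^ 2 * M * (Metric.diam (convexHull ℝ (Set.range u))) ^ 2 := by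
  intro v hv
  set T := convexHull ℝ (Set.range u)
  set C : ℝ := m * (m * M)
  have hM0 : 0 ≤ M :=
    (abs_nonneg _).trans (hM (u 0) (hTU (subset_convexHull ℝ _ ⟨0, rfl⟩)) ⟨0, hm⟩ ⟨0, hm⟩)
  have hφ' : ContDiffOn ℝ 1 (fderiv ℝ φ) U := hφ.fderiv_of_isOpen hU le_rfl
  have hTaylor : ∀ x ∈ T, |φ x - φ v - fderiv ℝ φ v (x - v)| ≤ C * ‖x - v‖ ^ 2 := fun x hx =>
    (convex_convexHull ℝ _).norm_image_sub_sub_fderiv_le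
      (fun z hz => (hφ.differentiableOn two_ne_zero).differentiableAt (hU.mem_nhds (hTU hz)))
      (fun z hz => (hφ'.differentiableOn one_ne_zero).differentiableAt (hU.mem_nhds (hTU hz)))
      (fun z hz => by
        simpa using EuclideanSpace.norm_fderiv_fderiv_le_of_abs_iteratedFDerivWithin_le hU
          (hTU hz) hM0 (hM z (hTU hz)))
      hv hx
  have hdiam : ∀ x ∈ T, ‖x - v‖ ≤ diam T := fun x hx =>
    (dist_eq_norm x v).symm.trans_le
      (dist_le_diam_of_mem (((Set.finite_range u).isCompact_convexHull (𝕜 := ℝ)).isBounded) hx hv)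
  calc |φ v - ψ v| = |ψ v - φ v| := abs_sub_comm _ _
    _ ≤ C * diam T ^ 2 := ψ.abs_sub_le_of_mem_convexHull (fderiv ℝ φ v : _ →ₗ[ℝ] ℝ) (φ v) hv <| by
        rintro _ ⟨i, rfl⟩
        have hui : u i ∈ T := subset_convexHull ℝ _ ⟨i, rfl⟩
        rw [hψ]
        exact (hTaylor _ hui).trans (by gcongr; exact hdiam _ hui)
    _ ≤ ((m : ℝ) + 1) ^ 2 * M * diam T ^ 2 := by
        gcongr
        show (m : ℝ) * (m * M) ≤ _
        nlinarith

theorem affine_interpolation_error_on_simplex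
    {m : ℕ} (hm : 1 ≤ m)
    (U : Set (EuclideanSpace ℝ (Fin m))) (hU : IsOpen U)
    (φ : EuclideanSpace ℝ (Fin m) → ℝ) (M : ℝ)
    (hφ : ContDiffOn ℝ 2 φ U)
    (hM : ∀ x ∈ U, ∀ i j : Fin m,
      |iteratedFDerivWithin ℝ 2 φ U x
          ![EuclideanSpace.single i (1 : ℝ), EuclideanSpace.single j (1 : ℝ)]| ≤ M)
    (u : Fin (m + 1) → EuclideanSpace ℝ (Fin m))
    (hu : AffineIndependent ℝ u)
    (hTU : convexHull ℝ (Set.range u) ⊆ U)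
    (ψ : EuclideanSpace ℝ (Fin m) →ᵃ[ℝ] ℝ)
    (hψ : ∀ i : Fin (m + 1), ψ (u i) = φ (u i)) :
    ∀ v ∈ convexHull ℝ (Set.range u),
      |φ v - ψ v| ≤ ((m : ℝ) + 1) ^ 2 * M * (Metric.diam (convexHull ℝ (Set.range u))) ^ 2 :=
  affine_interpolation_error_on_simplex_general hm U hU φ M hφ hM u hTU ψ hψ
end
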